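/- arXiv:2301.03390 — 7 statements merged into one kernel-verified Lean document; each statement's English description precedes it below -/
import Mathlib

section
/- Fix j ∈ {1,…,d} and suppose ∑_{e ∈ E, j ∈ e} W(e) ≥ 1. Let 𝓘 be a finite family of pairwise disjoint subsets of ℤ. Then ∑_{I ∈ 𝓘} ∏_{e ∈ E} |{t ∈ R_e : if j ∈ e then t(j) ∈ I}|^{W(e)} ≤ ∏_{e ∈ E} |R_e|^{W(e)}. -/
/-!
Put `x a e = n a e / |R_e|`, where `n a e` is the filtered count. These ratios lie in `[0, 1]`, and
for `e ∋ j` they sum over `a` to at most `1` because the `I a` are disjoint. Dropping the factors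
with `j ∉ e` and applying weighted AM-GM with the weights `W e / S`, `S = ∑_{e ∋ j} W e ≥ 1`, bounds
each summand by `∏_e |R_e|^{W e}` times a convex combination of the `x a e`, and summing over `a`
gives the claim.
-/

open Classical

/-- Real power with the convention that `0 ^ y = 0` for every exponent `y`
(in particular `0 ^ 0 = 0`); for nonzero base it is the usual real power. -/
noncomputable def pow0 (a y : ℝ) : ℝ := if a = 0 then 0 else Real.rpow a y

lemma pow0_nonneg {a : ℝ} (ha : 0 ≤ a) (y : ℝ) : 0 ≤ pow0 a y := by
  unfold pow0
  split_ifs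
  exacts [le_rfl, Real.rpow_nonneg ha y]

lemma pow0_le_rpow {a : ℝ} (ha : 0 ≤ a) (y : ℝ) : pow0 a y ≤ a ^ y := by
  unfold pow0
  split_ifs
  exacts [Real.rpow_nonneg ha y, le_rfl]

lemma pow0_le_pow0_mul_rpow_div {n P : ℝ} (hn : 0 ≤ n) (hnP : n ≤ P) (w : ℝ) :
    pow0 n w ≤ pow0 P w * (n / P) ^ w := by
  rcases (hn.trans hnP).eq_or_lt with hP | hP
  · obtain rfl : n = 0 := le_antisymm (hP ▸ hnP) hn
    simp [pow0, ← hP]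
  · calc pow0 n w ≤ (P * (n / P)) ^ w := by rw [mul_div_cancel₀ n hP.ne']; exact pow0_le_rpow hn w
      _ = pow0 P w * (n / P) ^ w := by
        rw [Real.mul_rpow hP.le (div_nonneg hn hP.le), pow0, if_neg hP.ne']
        rfl

namespace Finset

variable {α ι : Type*}

lemma prod_rpow_le_sum_mul_of_one_le_sum (s : Finset ι) (w x : ι → ℝ)
    (hw : ∀ i ∈ s, 0 ≤ w i) (hs : 1 ≤ ∑ i ∈ s, w i)
    (hx0 : ∀ i ∈ s, 0 ≤ x i) (hx1 : ∀ i ∈ s, x i ≤ 1) :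
    ∏ i ∈ s, x i ^ w i ≤ ∑ i ∈ s, w i / (∑ k ∈ s, w k) * x i := by
  set S := ∑ k ∈ s, w k
  have hS : 0 < S := one_pos.trans_le hs
  calc ∏ i ∈ s, x i ^ w i ≤ ∏ i ∈ s, x i ^ (w i / S) :=
        prod_le_prod (fun i hi => Real.rpow_nonneg (hx0 i hi) _) fun i hi =>
          Real.rpow_le_rpow_of_exponent_ge' (hx0 i hi) (hx1 i hi)
            (div_nonneg (hw i hi) hS.le) (div_le_self (hw i hi) hs)
    _ ≤ ∑ i ∈ s, w i / S * x i :=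
        Real.geom_mean_le_arith_mean_weighted s _ _ (fun i hi => div_nonneg (hw i hi) hS.le)
          (by rw [← sum_div, div_self hS.ne']) hx0

lemma sum_prod_rpow_le_one (A : Finset α) {s t : Finset ι} (hts : t ⊆ s) (w : ι → ℝ)
    (x : α → ι → ℝ) (hw : ∀ i ∈ s, 0 ≤ w i) (ht : 1 ≤ ∑ i ∈ t, w i)
    (hx0 : ∀ a ∈ A, ∀ i ∈ s, 0 ≤ x a i) (hx1 : ∀ a ∈ A, ∀ i ∈ s, x a i ≤ 1)
    (hsum : ∀ i ∈ t, ∑ a ∈ A, x a i ≤ 1) :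
    ∑ a ∈ A, ∏ i ∈ s, x a i ^ w i ≤ 1 := by
  set S := ∑ k ∈ t, w k
  have hS : 0 < S := one_pos.trans_le ht
  have hwt : ∀ i ∈ t, 0 ≤ w i := fun i hi => hw i (hts hi)
  calc ∑ a ∈ A, ∏ i ∈ s, x a i ^ w i ≤ ∑ a ∈ A, ∏ i ∈ t, x a i ^ w i :=
        sum_le_sum fun a ha => prod_le_prod_of_subset_of_le_one hts
          (fun i hi => Real.rpow_nonneg (hx0 a ha i hi) _)
          fun i hi _ => Real.rpow_le_one (hx0 a ha i hi) (hx1 a ha i hi) (hw i hi)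
    _ ≤ ∑ a ∈ A, ∑ i ∈ t, w i / S * x a i :=
        sum_le_sum fun a ha => prod_rpow_le_sum_mul_of_one_le_sum t w (x a) hwt ht
          (fun i hi => hx0 a ha i (hts hi)) fun i hi => hx1 a ha i (hts hi)
    _ = ∑ i ∈ t, w i / S * ∑ a ∈ A, x a i := by
        rw [sum_comm]
        simp only [mul_sum]
    _ ≤ ∑ i ∈ t, w i / S :=
        sum_le_sum fun i hi => mul_le_of_le_one_right (div_nonneg (hwt i hi) hS.le) (hsum i hi)
    _ = 1 := by rw [← sum_div, div_self hS.ne']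

lemma sum_card_filter_le_card {β : Type*} [Fintype ι] (R : Finset α) (f : α → β)
    (I : ι → Set β) (hI : Pairwise (Function.onFun Disjoint I)) :
    ∑ a, #(R.filter fun r => f r ∈ I a) ≤ #R := by
  have hpd : ((univ : Finset ι) : Set ι).PairwiseDisjoint fun a => R.filter fun r => f r ∈ I a :=
    fun a _ b _ hab => disjoint_filter.2 fun _ _ ha hb => Set.disjoint_left.1 (hI hab) ha hb
  rw [← card_biUnion hpd]
  exact card_le_card (biUnion_subset.2 fun _ _ => filter_subset _ _)

end Finset

open Finset in
theorem single_attribute_agm_step_general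
    (d : ℕ)
    (E : Finset (Finset (Fin d)))
    (R : Finset (Fin d) → Finset (Fin d → ℤ))
    (W : Finset (Fin d) → ℝ) (hW : ∀ e ∈ E, 0 ≤ W e)
    (j : Fin d) (hcov : 1 ≤ ∑ e ∈ E.filter (fun e => j ∈ e), W e)
    (K : ℕ) (I : Fin K → Set ℤ)
    (hdisj : ∀ a b : Fin K, a ≠ b → Disjoint (I a) (I b)) :
    ∑ a : Fin K, ∏ e ∈ E,
        pow0 (((R e).filter (fun t => j ∈ e → t j ∈ I a)).card : ℝ) (W e)
      ≤ ∏ e ∈ E, pow0 ((R e).card : ℝ) (W e) := by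
  set n : Fin K → Finset (Fin d) → ℝ := fun a e => #((R e).filter fun t => j ∈ e → t j ∈ I a)
  have hn_le : ∀ a e, n a e ≤ #(R e) := fun a e => by
    simp only [n]
    exact_mod_cast card_filter_le _ _
  have hsum : ∀ e ∈ E.filter (fun e => j ∈ e), ∑ a, n a e / #(R e) ≤ 1 := by
    intro e he
    have hj : j ∈ e := (mem_filter.1 he).2
    rw [← sum_div]
    refine div_le_one_of_le₀ ?_ (Nat.cast_nonneg _)
    simp only [n, hj, true_imp_iff]
    exact_mod_cast sum_card_filter_le_card (R e) (· j) I hdisj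
  have hRHS_nonneg : 0 ≤ ∏ e ∈ E, pow0 #(R e) (W e) :=
    prod_nonneg fun e _ => pow0_nonneg (Nat.cast_nonneg _) _
  calc ∑ a, ∏ e ∈ E, pow0 (n a e) (W e)
      ≤ ∑ a, ∏ e ∈ E, pow0 #(R e) (W e) * (n a e / #(R e)) ^ W e :=
        sum_le_sum fun a _ => prod_le_prod (fun e _ => pow0_nonneg (Nat.cast_nonneg _) _)
          fun e _ => pow0_le_pow0_mul_rpow_div (Nat.cast_nonneg _) (hn_le a e) _
    _ = (∏ e ∈ E, pow0 #(R e) (W e)) * ∑ a, ∏ e ∈ E, (n a e / #(R e)) ^ W e := by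
        simp only [prod_mul_distrib, mul_sum]
    _ ≤ ∏ e ∈ E, pow0 #(R e) (W e) :=
        mul_le_of_le_one_right hRHS_nonneg <|
          sum_prod_rpow_le_one univ (filter_subset _ E) W (fun a e => n a e / #(R e)) hW hcov
            (fun _ _ _ _ => div_nonneg (Nat.cast_nonneg _) (Nat.cast_nonneg _))
            (fun a _ e _ => div_le_one_of_le₀ (hn_le a e) (Nat.cast_nonneg _)) hsum

theorem single_attribute_agm_step
    (d : ℕ) (hd : 0 < d)
    (E : Finset (Finset (Fin d))) (hE : E.Nonempty) (hEne : ∀ e ∈ E, e.Nonempty)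
    (R : Finset (Fin d) → Finset (Fin d → ℤ))
    (W : Finset (Fin d) → ℝ) (hW : ∀ e ∈ E, 0 ≤ W e)
    (j : Fin d) (hcov : 1 ≤ ∑ e ∈ E.filter (fun e => j ∈ e), W e)
    (K : ℕ) (I : Fin K → Set ℤ)
    (hdisj : ∀ a b : Fin K, a ≠ b → Disjoint (I a) (I b)) :
    ∑ a : Fin K, ∏ e ∈ E,
        pow0 (((R e).filter (fun t => j ∈ e → t j ∈ I a)).card : ℝ) (W e)
      ≤ ∏ e ∈ E, pow0 ((R e).card : ℝ) (W e) :=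
  single_attribute_agm_step_general d E R W hW j hcov K I hdisj
end

section
/- (Generalized AGM bound.) Let W be a fractional edge cover of (the hypergraph with vertex set {1,…,d} and edge set) E. For each i ∈ {1,…,d}, let 𝓘_i be a finite family of pairwise disjoint subsets of ℤ. Then ∑_{I_1 ∈ 𝓘_1} ∑_{I_2 ∈ 𝓘_2} ⋯ ∑_{I_d ∈ 𝓘_d} ∏_{e ∈ E} |R_e ⋉ B(I_1,…,I_d)|^{W(e)} ≤ ∏_{e ∈ E} |R_e|^{W(e)}. -/
open Classical

lemma pow0_eq_rpow {a : ℝ} (h : a ≠ 0) (y : ℝ) : pow0 a y = a ^ y := by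
  unfold pow0; rw [if_neg h, Real.rpow_eq_pow]

lemma pow0_mono {a b y : ℝ} (ha : 0 ≤ a) (hab : a ≤ b) (hy : 0 ≤ y) :
    pow0 a y ≤ pow0 b y := by
  by_cases h : a = 0
  · rw [h]
    unfold pow0
    rw [if_pos rfl]
    split
    · exact le_refl 0
    · exact Real.rpow_nonneg (ha.trans hab) y
  · have hb : b ≠ 0 := by
      intro hb
      exact h (le_antisymm (hab.trans hb.le) ha)
    rw [pow0_eq_rpow h, pow0_eq_rpow hb]
    exact Real.rpow_le_rpow ha hab hy

/-- Inner weighted Hölder inequality with the `pow0` convention. -/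
lemma inner_holder {ι A : Type*} [Fintype A] (s : Finset ι) (W : ι → ℝ)
    (hW : ∀ e ∈ s, 0 ≤ W e) (hsum : 1 ≤ ∑ e ∈ s, W e)
    (x : ι → A → ℝ) (hx : ∀ e a, 0 ≤ x e a) :
    ∑ a : A, ∏ e ∈ s, pow0 (x e a) (W e) ≤ ∏ e ∈ s, pow0 (∑ a : A, x e a) (W e) := by
  by_cases hz : ∃ e ∈ s, ∑ a : A, x e a = 0
  · obtain ⟨e₀, he₀, hS0⟩ := hz
    have hx0 : ∀ a : A, x e₀ a = 0 := fun a =>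
      (Finset.sum_eq_zero_iff_of_nonneg (fun a _ => hx e₀ a)).1 hS0 a (Finset.mem_univ a)
    have hL : ∑ a : A, ∏ e ∈ s, pow0 (x e a) (W e) = 0 := by
      apply Finset.sum_eq_zero
      intro a _
      apply Finset.prod_eq_zero he₀
      simp [pow0, hx0 a]
    rw [hL]
    exact Finset.prod_nonneg fun e _ => pow0_nonneg (Finset.sum_nonneg fun a _ => hx e a) _
  · push_neg at hz
    have hS : ∀ e ∈ s, 0 < ∑ a : A, x e a := fun e he =>
      lt_of_le_of_ne (Finset.sum_nonneg fun a _ => hx e a) (Ne.symm (hz e he))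
    set w := ∑ e ∈ s, W e with hw
    have hw0 : 0 < w := lt_of_lt_of_le one_pos hsum
    set S : ι → ℝ := fun e => ∑ a : A, x e a with hSdef
    have hratio : ∀ e ∈ s, ∀ a : A, 0 ≤ x e a / S e ∧ x e a / S e ≤ 1 := by
      intro e he a
      refine ⟨div_nonneg (hx e a) (hS e he).le, ?_⟩
      rw [div_le_one (hS e he)]
      exact Finset.single_le_sum (fun b _ => hx e b) (Finset.mem_univ a)
    have hSW : 0 ≤ ∏ e ∈ s, (S e) ^ (W e) :=
      Finset.prod_nonneg fun e he => Real.rpow_nonneg (hS e he).le _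
    have step1 : ∀ a : A, ∏ e ∈ s, (x e a) ^ (W e)
        = (∏ e ∈ s, (S e) ^ (W e)) * ∏ e ∈ s, (x e a / S e) ^ (W e) := by
      intro a
      rw [← Finset.prod_mul_distrib]
      refine Finset.prod_congr rfl fun e he => ?_
      have hx' : S e * (x e a / S e) = x e a := by
        rw [mul_comm]; exact div_mul_cancel₀ _ (hS e he).ne'
      rw [← Real.mul_rpow (hS e he).le (hratio e he a).1, hx']
    have step2 : ∀ a : A, ∏ e ∈ s, (x e a / S e) ^ (W e)
        ≤ ∏ e ∈ s, (x e a / S e) ^ (W e / w) := by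
      intro a
      apply Finset.prod_le_prod
      · intro e he; exact Real.rpow_nonneg (hratio e he a).1 _
      · intro e he
        rcases eq_or_lt_of_le (hratio e he a).1 with h0 | h0
        · by_cases hWe : W e = 0
          · rw [hWe, zero_div]
          · rw [← h0, Real.zero_rpow hWe,
              Real.zero_rpow (div_ne_zero hWe hw0.ne')]
        · exact Real.rpow_le_rpow_of_exponent_ge h0 (hratio e he a).2
            (div_le_self (hW e he) hsum)
    have step3 : ∀ a : A, ∏ e ∈ s, (x e a / S e) ^ (W e / w)
        ≤ ∑ e ∈ s, (W e / w) * (x e a / S e) := by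
      intro a
      exact Real.geom_mean_le_arith_mean_weighted s (fun e => W e / w)
        (fun e => x e a / S e)
        (fun e he => div_nonneg (hW e he) hw0.le)
        (by rw [← Finset.sum_div]; exact div_self hw0.ne')
        (fun e he => (hratio e he a).1)
    have step4 : ∑ a : A, ∑ e ∈ s, (W e / w) * (x e a / S e) = 1 := by
      rw [Finset.sum_comm]
      have hterm : ∀ e ∈ s, ∑ a : A, (W e / w) * (x e a / S e) = W e / w := by
        intro e he
        rw [← Finset.mul_sum, ← Finset.sum_div]
        rw [div_self (hS e he).ne', mul_one]
      rw [Finset.sum_congr rfl hterm, ← Finset.sum_div, div_self hw0.ne']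
    calc ∑ a : A, ∏ e ∈ s, pow0 (x e a) (W e)
        ≤ ∑ a : A, ∏ e ∈ s, (x e a) ^ (W e) := by
          refine Finset.sum_le_sum fun a _ => Finset.prod_le_prod
            (fun e _ => pow0_nonneg (hx e a) _) (fun e _ => pow0_le_rpow (hx e a) _)
      _ = ∑ a : A, (∏ e ∈ s, (S e) ^ (W e)) * ∏ e ∈ s, (x e a / S e) ^ (W e) :=
          Finset.sum_congr rfl fun a _ => step1 a
      _ ≤ ∑ a : A, (∏ e ∈ s, (S e) ^ (W e)) * ∑ e ∈ s, (W e / w) * (x e a / S e) :=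
          Finset.sum_le_sum fun a _ =>
            mul_le_mul_of_nonneg_left ((step2 a).trans (step3 a)) hSW
      _ = (∏ e ∈ s, (S e) ^ (W e)) * ∑ a : A, ∑ e ∈ s, (W e / w) * (x e a / S e) := by
          rw [← Finset.mul_sum]
      _ = ∏ e ∈ s, (S e) ^ (W e) := by rw [step4, mul_one]
      _ = ∏ e ∈ s, pow0 (S e) (W e) :=
          Finset.prod_congr rfl fun e he => (pow0_eq_rpow (hS e he).ne' _).symm

/-- Counting lemma: summing cardinalities of pairwise-disjoint sets,
each contained in a bigger set. -/
lemma sum_card_le {α A : Type*} [DecidableEq α] [Fintype A] (F : A → Finset α) (G : Finset α)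
    (hsub : ∀ a, F a ⊆ G)
    (hdis : ∀ a b, a ≠ b → Disjoint (F a) (F b)) :
    ∑ a : A, ((F a).card : ℝ) ≤ (G.card : ℝ) := by
  rw [← Nat.cast_sum]
  apply Nat.cast_le.2
  rw [← Finset.card_biUnion (fun a _ b _ hab => hdis a b hab)]
  apply Finset.card_le_card
  intro t ht
  obtain ⟨a, _, hta⟩ := Finset.mem_biUnion.1 ht
  exact hsub a hta

theorem generalized_agm_bound
    (d : ℕ) (hd : 0 < d)
    (E : Finset (Finset (Fin d))) (hE : E.Nonempty) (hEne : ∀ e ∈ E, e.Nonempty)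
    (R : Finset (Fin d) → Finset (Fin d → ℤ))
    (W : Finset (Fin d) → ℝ) (hW : ∀ e ∈ E, 0 ≤ W e)
    (hcov : ∀ i : Fin d, 1 ≤ ∑ e ∈ E.filter (fun e => i ∈ e), W e)
    (K : Fin d → ℕ) (I : (i : Fin d) → Fin (K i) → Set ℤ)
    (hdisj : ∀ i : Fin d, ∀ a b : Fin (K i), a ≠ b → Disjoint (I i a) (I i b)) :
    ∑ f : (i : Fin d) → Fin (K i), ∏ e ∈ E,
        pow0 (((R e).filter (fun t => ∀ i ∈ e, t i ∈ I i (f i))).card : ℝ) (W e)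
      ≤ ∏ e ∈ E, pow0 ((R e).card : ℝ) (W e) := by
  by_cases hK : ∀ i, 0 < K i
  · -- all K i positive; pick a base point
    set f₀ : (i : Fin d) → Fin (K i) := fun i => ⟨0, hK i⟩ with hf₀
    have key : ∀ s : Finset (Fin d),
        ∑ f ∈ Finset.univ.filter
            (fun f : (i : Fin d) → Fin (K i) => ∀ i, i ∉ s → f i = f₀ i),
          ∏ e ∈ E, pow0
            (((R e).filter (fun t => ∀ i ∈ e, i ∈ s → t i ∈ I i (f i))).card : ℝ) (W e)
        ≤ ∏ e ∈ E, pow0 ((R e).card : ℝ) (W e) := by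
      intro s
      induction s using Finset.induction_on with
      | empty =>
        have hfilt : Finset.univ.filter
            (fun f : (i : Fin d) → Fin (K i) => ∀ i, i ∉ (∅ : Finset (Fin d)) → f i = f₀ i)
            = {f₀} := by
          ext f
          simp [funext_iff]
        rw [hfilt, Finset.sum_singleton]
        refine le_of_eq (Finset.prod_congr rfl fun e he => ?_)
        congr 2
        rw [Finset.filter_true_of_mem]
        intro t _ i _ hmem
        exact absurd hmem (Finset.notMem_empty i)
      | @insert j s hjs ih =>
        have hbij : ∑ f ∈ Finset.univ.filter
              (fun f : (i : Fin d) → Fin (K i) => ∀ i, i ∉ insert j s → f i = f₀ i),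
              ∏ e ∈ E, pow0
                (((R e).filter
                  (fun t => ∀ i ∈ e, i ∈ insert j s → t i ∈ I i (f i))).card : ℝ) (W e)
            = ∑ g ∈ Finset.univ.filter
                (fun f : (i : Fin d) → Fin (K i) => ∀ i, i ∉ s → f i = f₀ i),
                ∑ a : Fin (K j),
              ∏ e ∈ E, pow0
                (((R e).filter
                  (fun t => ∀ i ∈ e, i ∈ insert j s →
                    t i ∈ I i (Function.update g j a i))).card : ℝ) (W e) := by
          rw [← Finset.sum_product'
            (Finset.univ.filter
              (fun f : (i : Fin d) → Fin (K i) => ∀ i, i ∉ s → f i = f₀ i))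
            Finset.univ
            (fun g a => ∏ e ∈ E, pow0
              (((R e).filter
                (fun t => ∀ i ∈ e, i ∈ insert j s →
                  t i ∈ I i (Function.update g j a i))).card : ℝ) (W e))]
          refine Finset.sum_nbij'
            (i := fun f => (Function.update f j (f₀ j), f j))
            (j := fun p => Function.update p.1 j p.2) ?_ ?_ ?_ ?_ ?_
          · intro f hf
            rw [Finset.mem_filter] at hf
            rw [Finset.mem_product]
            refine ⟨?_, Finset.mem_univ _⟩
            rw [Finset.mem_filter]
            refine ⟨Finset.mem_univ _, fun i hi => ?_⟩
            dsimp only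
            by_cases hij : i = j
            · subst hij; simp
            · rw [Function.update_of_ne hij]
              exact hf.2 i (by simp [hij, hi])
          · intro p hp
            rw [Finset.mem_product, Finset.mem_filter] at hp
            rw [Finset.mem_filter]
            refine ⟨Finset.mem_univ _, fun i hi => ?_⟩
            have hij : i ≠ j := fun h => hi (h ▸ Finset.mem_insert_self j s)
            rw [Function.update_of_ne hij]
            exact hp.1.2 i (fun h => hi (Finset.mem_insert_of_mem h))
          · intro f hf
            dsimp only
            rw [Function.update_idem]
            exact Function.update_eq_self j f
          · intro p hp
            rw [Finset.mem_product, Finset.mem_filter] at hp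
            have hgj : p.1 j = f₀ j := hp.1.2 j hjs
            rw [Function.update_idem, Function.update_self, ← hgj,
              Function.update_eq_self]
          · intro f hf
            dsimp only
            rw [Function.update_idem, Function.update_eq_self]
        rw [hbij]
        have hinner : ∀ g ∈ Finset.univ.filter
              (fun f : (i : Fin d) → Fin (K i) => ∀ i, i ∉ s → f i = f₀ i),
            ∑ a : Fin (K j),
              ∏ e ∈ E, pow0
                (((R e).filter
                  (fun t => ∀ i ∈ e, i ∈ insert j s →
                    t i ∈ I i (Function.update g j a i))).card : ℝ) (W e)
            ≤ ∏ e ∈ E, pow0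
              (((R e).filter (fun t => ∀ i ∈ e, i ∈ s → t i ∈ I i (g i))).card : ℝ) (W e) := by
          intro g hg
          have hTsplit : ∀ a : Fin (K j),
              ∏ e ∈ E, pow0
                (((R e).filter
                  (fun t => ∀ i ∈ e, i ∈ insert j s →
                    t i ∈ I i (Function.update g j a i))).card : ℝ) (W e)
              = (∏ e ∈ E.filter (fun e => j ∈ e), pow0
                  (((R e).filter (fun t => ∀ i ∈ e, i ∈ insert j s →
                    t i ∈ I i (Function.update g j a i))).card : ℝ) (W e))
                * ∏ e ∈ E.filter (fun e => ¬ j ∈ e), pow0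
                  (((R e).filter (fun t => ∀ i ∈ e, i ∈ s → t i ∈ I i (g i))).card : ℝ) (W e) := by
            intro a
            rw [← Finset.prod_filter_mul_prod_filter_not E (fun e => j ∈ e)]
            congr 1
            refine Finset.prod_congr rfl fun e he => ?_
            have hje : j ∉ e := (Finset.mem_filter.1 he).2
            have hpred : (R e).filter
                (fun t => ∀ i ∈ e, i ∈ insert j s → t i ∈ I i (Function.update g j a i))
                = (R e).filter (fun t => ∀ i ∈ e, i ∈ s → t i ∈ I i (g i)) := by
              apply Finset.filter_congr
              intro t _
              constructor
              · intro h i hie his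
                have hij : i ≠ j := fun h' => hje (h' ▸ hie)
                have := h i hie (Finset.mem_insert_of_mem his)
                rwa [Function.update_of_ne hij] at this
              · intro h i hie himem
                have hij : i ≠ j := fun h' => hje (h' ▸ hie)
                rcases Finset.mem_insert.1 himem with h' | h'
                · exact absurd h' hij
                · rw [Function.update_of_ne hij]
                  exact h i hie h'
            rw [hpred]
          have hsum_bound : ∑ a : Fin (K j), ∏ e ∈ E.filter (fun e => j ∈ e), pow0
                (((R e).filter (fun t => ∀ i ∈ e, i ∈ insert j s →
                  t i ∈ I i (Function.update g j a i))).card : ℝ) (W e)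
              ≤ ∏ e ∈ E.filter (fun e => j ∈ e), pow0
                (((R e).filter (fun t => ∀ i ∈ e, i ∈ s → t i ∈ I i (g i))).card : ℝ) (W e) := by
            have H := inner_holder (E.filter (fun e => j ∈ e)) W
              (fun e he => hW e (Finset.mem_filter.1 he).1) (hcov j)
              (fun e a => (((R e).filter (fun t => ∀ i ∈ e, i ∈ insert j s →
                t i ∈ I i (Function.update g j a i))).card : ℝ))
              (fun e a => Nat.cast_nonneg _)
            refine le_trans H ?_
            refine Finset.prod_le_prod
              (fun e _ => pow0_nonneg (Finset.sum_nonneg fun a _ => Nat.cast_nonneg _) _)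
              (fun e he => ?_)
            have hje : j ∈ e := (Finset.mem_filter.1 he).2
            refine pow0_mono (Finset.sum_nonneg fun a _ => Nat.cast_nonneg _) ?_
              (hW e (Finset.mem_filter.1 he).1)
            show ∑ a : Fin (K j), (((R e).filter (fun t => ∀ i ∈ e, i ∈ insert j s →
                t i ∈ I i (Function.update g j a i))).card : ℝ)
              ≤ (((R e).filter (fun t => ∀ i ∈ e, i ∈ s → t i ∈ I i (g i))).card : ℝ)
            have hsub : ∀ a : Fin (K j), ((R e).filter (fun t => ∀ i ∈ e, i ∈ insert j s →
                t i ∈ I i (Function.update g j a i)))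
                ⊆ (R e).filter (fun t => ∀ i ∈ e, i ∈ s → t i ∈ I i (g i)) := by
              intro a t ht
              rw [Finset.mem_filter] at ht ⊢
              refine ⟨ht.1, fun i hie his => ?_⟩
              have hij : i ≠ j := fun h' => hjs (h' ▸ his)
              have := ht.2 i hie (Finset.mem_insert_of_mem his)
              rwa [Function.update_of_ne hij] at this
            have hdis : ∀ a b : Fin (K j), a ≠ b →
                Disjoint ((R e).filter (fun t => ∀ i ∈ e, i ∈ insert j s →
                  t i ∈ I i (Function.update g j a i)))
                ((R e).filter (fun t => ∀ i ∈ e, i ∈ insert j s →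
                  t i ∈ I i (Function.update g j b i))) := by
              intro a b hab
              rw [Finset.disjoint_left]
              intro t hta htb
              rw [Finset.mem_filter] at hta htb
              have h1 := hta.2 j hje (Finset.mem_insert_self j s)
              have h2 := htb.2 j hje (Finset.mem_insert_self j s)
              rw [Function.update_self] at h1 h2
              exact Set.disjoint_left.1 (hdisj j a b hab) h1 h2
            exact sum_card_le _ _ hsub hdis
          calc ∑ a : Fin (K j),
              ∏ e ∈ E, pow0
                (((R e).filter
                  (fun t => ∀ i ∈ e, i ∈ insert j s →
                    t i ∈ I i (Function.update g j a i))).card : ℝ) (W e)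
              = (∑ a : Fin (K j), ∏ e ∈ E.filter (fun e => j ∈ e), pow0
                  (((R e).filter (fun t => ∀ i ∈ e, i ∈ insert j s →
                    t i ∈ I i (Function.update g j a i))).card : ℝ) (W e))
                * ∏ e ∈ E.filter (fun e => ¬ j ∈ e), pow0
                  (((R e).filter (fun t => ∀ i ∈ e, i ∈ s → t i ∈ I i (g i))).card : ℝ) (W e) := by
                rw [Finset.sum_mul]
                exact Finset.sum_congr rfl fun a _ => hTsplit a
            _ ≤ (∏ e ∈ E.filter (fun e => j ∈ e), pow0
                  (((R e).filter (fun t => ∀ i ∈ e, i ∈ s → t i ∈ I i (g i))).card : ℝ) (W e))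
                * ∏ e ∈ E.filter (fun e => ¬ j ∈ e), pow0
                  (((R e).filter (fun t => ∀ i ∈ e, i ∈ s → t i ∈ I i (g i))).card : ℝ) (W e) := by
                refine mul_le_mul_of_nonneg_right hsum_bound ?_
                exact Finset.prod_nonneg fun e _ => pow0_nonneg (Nat.cast_nonneg _) _
            _ = ∏ e ∈ E, pow0
                  (((R e).filter (fun t => ∀ i ∈ e, i ∈ s → t i ∈ I i (g i))).card : ℝ) (W e) :=
                Finset.prod_filter_mul_prod_filter_not E (fun e => j ∈ e) _
        exact le_trans (Finset.sum_le_sum hinner) ih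
    have h1 : Finset.univ.filter
        (fun f : (i : Fin d) → Fin (K i) => ∀ i, i ∉ (Finset.univ : Finset (Fin d)) → f i = f₀ i)
        = Finset.univ :=
      Finset.filter_true_of_mem fun f _ => fun i hi => absurd (Finset.mem_univ i) hi
    have hk := key Finset.univ
    rw [h1] at hk
    refine le_trans (le_of_eq ?_) hk
    refine Finset.sum_congr rfl fun f _ => Finset.prod_congr rfl fun e he => ?_
    have hpred : (R e).filter (fun t => ∀ i ∈ e, t i ∈ I i (f i))
        = (R e).filter (fun t => ∀ i ∈ e, i ∈ (Finset.univ : Finset (Fin d)) → t i ∈ I i (f i)) :=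
      Finset.filter_congr fun t _ =>
        ⟨fun h i hie _ => h i hie, fun h i hie => h i hie (Finset.mem_univ i)⟩
    rw [hpred]
  · -- some K i = 0 : the sum is empty
    push_neg at hK
    obtain ⟨i₀, hi₀⟩ := hK
    have : IsEmpty ((i : Fin d) → Fin (K i)) :=
      ⟨fun f => absurd (f i₀).2 (by omega)⟩
    rw [Finset.univ_eq_empty, Finset.sum_empty]
    exact Finset.prod_nonneg fun e _ => pow0_nonneg (Nat.cast_nonneg _) _
end

section
/- (AGM bound.) Let W be a fractional edge cover of (the hypergraph with vertex set {1,…,d} and edge set) E. Define the join join(R) as the set of all tuples t : {1,…,d} → ℤ such that for every e ∈ E there exists s ∈ R_e with s(i) = t(i) for all i ∈ e. Then join(R) is a finite set and |join(R)| ≤ ∏_{e ∈ E} |R_e|^{W(e)}. -/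
/-!
Induction on the number of vertices. Split the join according to the value `z` of the first
coordinate: the slice at `z` is a join on the remaining vertices, of the relations `R e`
restricted to `s 0 = z` on the edges through vertex `0`, and the weights still cover the remaining
vertices. Summing the inductive bounds over `z`, the edges through vertex `0` carry total weight
at least `1`, and Hölder's inequality for the normalized weights `W e / ∑ W` bounds
`∑ z, ∏ e, #{s ∈ R e | s 0 = z} ^ W e` by `∏ e, #(R e) ^ W e`.
-/

open Classical

open Finset

variable {κ ζ β : Type*}

namespace Real

theorem sum_prod_rpow_le_prod_sum_rpow (Z : Finset ζ) (I : Finset κ) (f : κ → ζ → ℝ) (w : κ → ℝ)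
    (hf : ∀ k ∈ I, ∀ z ∈ Z, 0 ≤ f k z) (hw : ∀ k ∈ I, 0 ≤ w k) (hw1 : ∑ k ∈ I, w k = 1) :
    ∑ z ∈ Z, ∏ k ∈ I, f k z ^ w k ≤ ∏ k ∈ I, (∑ z ∈ Z, f k z) ^ w k := by
  set S : κ → ℝ := fun k => ∑ z ∈ Z, f k z
  have hS : ∀ k ∈ I, 0 ≤ S k := fun k hk => sum_nonneg (hf k hk)
  have hnormalize : ∀ k ∈ I, ∀ z ∈ Z, f k z ^ w k = S k ^ w k * (f k z / S k) ^ w k := by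
    intro k hk z hz
    have hfS : S k = 0 → f k z = 0 := fun h =>
      le_antisymm (h ▸ single_le_sum (hf k hk) hz) (hf k hk z hz)
    rw [← mul_rpow (hS k hk) (div_nonneg (hf k hk z hz) (hS k hk)), mul_div_cancel_of_imp' hfS]
  calc ∑ z ∈ Z, ∏ k ∈ I, f k z ^ w k
      = (∏ k ∈ I, S k ^ w k) * ∑ z ∈ Z, ∏ k ∈ I, (f k z / S k) ^ w k := by
        rw [mul_sum]
        refine sum_congr rfl fun z hz => ?_
        rw [← prod_mul_distrib]
        exact prod_congr rfl fun k hk => hnormalize k hk z hz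
    _ ≤ (∏ k ∈ I, S k ^ w k) * ∑ z ∈ Z, ∑ k ∈ I, w k * (f k z / S k) := by
        gcongr with z hz
        · exact prod_nonneg fun k hk => rpow_nonneg (hS k hk) _
        · exact geom_mean_le_arith_mean_weighted I w _ hw hw1
            fun k hk => div_nonneg (hf k hk z hz) (hS k hk)
    _ = (∏ k ∈ I, S k ^ w k) * ∑ k ∈ I, w k * (S k / S k) := by
        simp only [sum_comm (s := Z), ← mul_sum, ← sum_div, S]
    _ ≤ (∏ k ∈ I, S k ^ w k) * ∑ k ∈ I, w k := by
        gcongr with k hk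
        · exact prod_nonneg fun k hk => rpow_nonneg (hS k hk) _
        · exact mul_le_of_le_one_right (hw k hk) (div_self_le_one _)
    _ = ∏ k ∈ I, S k ^ w k := by rw [hw1, mul_one]

theorem sum_prod_rpow_le_prod_rpow_of_sum_le (Z : Finset ζ) (I : Finset κ) (a : κ → ζ → ℝ)
    (A W : κ → ℝ) (ha : ∀ k ∈ I, ∀ z ∈ Z, 0 ≤ a k z) (hA : ∀ k ∈ I, ∑ z ∈ Z, a k z ≤ A k)
    (hW : ∀ k ∈ I, 0 ≤ W k) (hW1 : 1 ≤ ∑ k ∈ I, W k) :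
    ∑ z ∈ Z, ∏ k ∈ I, a k z ^ W k ≤ ∏ k ∈ I, A k ^ W k := by
  set w : κ → ℝ := fun k => W k / ∑ j ∈ I, W j
  have hw : ∀ k ∈ I, 0 ≤ w k := fun k hk => div_nonneg (hW k hk) (zero_le_one.trans hW1)
  have hw1 : ∑ k ∈ I, w k = 1 := by
    rw [← sum_div, div_self (zero_lt_one.trans_le hW1).ne']
  have hwW : ∀ k ∈ I, 0 ≤ W k - w k := fun k hk => sub_nonneg.2 (div_le_self (hW k hk) hW1)
  have hsplit : ∀ k ∈ I, ∀ x : ℝ, 0 ≤ x → x ^ W k = x ^ (W k - w k) * x ^ w k := fun k hk x hx => by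
    rw [← rpow_add_of_nonneg hx (hwW k hk) (hw k hk), sub_add_cancel]
  have hA0 : ∀ k ∈ I, 0 ≤ A k := fun k hk => (sum_nonneg (ha k hk)).trans (hA k hk)
  -- `a k z ^ W k ≤ A k ^ (W k - w k) * a k z ^ w k` moves the excess weight onto the bound `A k`
  calc ∑ z ∈ Z, ∏ k ∈ I, a k z ^ W k
      = ∑ z ∈ Z, ∏ k ∈ I, a k z ^ (W k - w k) * a k z ^ w k :=
        sum_congr rfl fun z hz => prod_congr rfl fun k hk => hsplit k hk _ (ha k hk z hz)
    _ ≤ ∑ z ∈ Z, ∏ k ∈ I, A k ^ (W k - w k) * a k z ^ w k := by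
        refine sum_le_sum fun z hz => prod_le_prod (fun k hk => ?_) fun k hk => ?_
        · exact mul_nonneg (rpow_nonneg (ha k hk z hz) _) (rpow_nonneg (ha k hk z hz) _)
        · have hle : a k z ≤ A k := (single_le_sum (ha k hk) hz).trans (hA k hk)
          exact mul_le_mul_of_nonneg_right (rpow_le_rpow (ha k hk z hz) hle (hwW k hk))
            (rpow_nonneg (ha k hk z hz) _)
    _ = (∏ k ∈ I, A k ^ (W k - w k)) * ∑ z ∈ Z, ∏ k ∈ I, a k z ^ w k := by
        simp only [prod_mul_distrib, mul_sum]
    _ ≤ (∏ k ∈ I, A k ^ (W k - w k)) * ∏ k ∈ I, (∑ z ∈ Z, a k z) ^ w k := by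
        gcongr
        · exact prod_nonneg fun k hk => rpow_nonneg (hA0 k hk) _
        · exact sum_prod_rpow_le_prod_sum_rpow Z I a w ha hw hw1
    _ ≤ (∏ k ∈ I, A k ^ (W k - w k)) * ∏ k ∈ I, A k ^ w k := by
        refine mul_le_mul_of_nonneg_left (prod_le_prod (fun k hk => ?_) fun k hk => ?_)
          (prod_nonneg fun k hk => rpow_nonneg (hA0 k hk) _)
        · exact rpow_nonneg (sum_nonneg (ha k hk)) _
        · exact rpow_le_rpow (sum_nonneg (ha k hk)) (hA k hk) (hw k hk)
    _ = ∏ k ∈ I, A k ^ W k := by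
        rw [← prod_mul_distrib]
        exact prod_congr rfl fun k hk => (hsplit k hk _ (hA0 k hk)).symm

end Real

def join {α : Type*} (E : Finset κ) (edge : κ → Finset α) (R : κ → Finset (α → β)) :
    Set (α → β) :=
  {t | ∀ k ∈ E, ∃ s ∈ R k, ∀ i ∈ edge k, s i = t i}

def IsFractionalEdgeCover {α : Type*} [DecidableEq α] (E : Finset κ) (edge : κ → Finset α)
    (W : κ → ℝ) : Prop :=
  (∀ k ∈ E, 0 ≤ W k) ∧ ∀ i, 1 ≤ ∑ k ∈ E with i ∈ edge k, W k

theorem IsFractionalEdgeCover.exists_mem_edge {α : Type*} [DecidableEq α] {E : Finset κ}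
    {edge : κ → Finset α} {W : κ → ℝ} (hW : IsFractionalEdgeCover E edge W) (i : α) :
    ∃ k ∈ E, i ∈ edge k := by
  by_contra! h
  have := hW.2 i
  rw [filter_false_of_mem h, sum_empty] at this
  norm_num at this

theorem join_finite {α : Type*} [Finite α] {E : Finset κ} {edge : κ → Finset α}
    (hcover : ∀ i, ∃ k ∈ E, i ∈ edge k) (R : κ → Finset (α → β)) : (join E edge R).Finite := by
  refine (Set.Finite.pi fun i =>
    E.finite_toSet.biUnion fun k _ => (R k).finite_toSet.image (· i)).subset ?_
  intro t ht i _
  obtain ⟨k, hk, hik⟩ := hcover i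
  obtain ⟨s, hs, hst⟩ := ht k hk
  exact Set.mem_biUnion hk ⟨s, hs, hst i hik⟩

section VertexElimination

variable {n : ℕ} (edge : κ → Finset (Fin (n + 1)))

def tailEdge (k : κ) : Finset (Fin n) :=
  {i | i.succ ∈ edge k}

noncomputable def tailRel (R : κ → Finset (Fin (n + 1) → β)) (z : β) (k : κ) : Finset (Fin n → β) :=
  {s ∈ R k | 0 ∈ edge k → s 0 = z}.image Fin.tail

variable {edge}

theorem IsFractionalEdgeCover.tail {E : Finset κ} {W : κ → ℝ}
    (hW : IsFractionalEdgeCover E edge W) : IsFractionalEdgeCover E (tailEdge edge) W :=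
  ⟨hW.1, fun i => by simpa [tailEdge] using hW.2 i.succ⟩

theorem image_tail_filter_subset_join {E : Finset κ} {R : κ → Finset (Fin (n + 1) → β)}
    {T : Finset (Fin (n + 1) → β)} (hT : ↑T ⊆ join E edge R) (z : β) :
    ↑({t ∈ T | t 0 = z}.image Fin.tail) ⊆ join E (tailEdge edge) (tailRel edge R z) := by
  intro _ ht k hk
  obtain ⟨t, htz, rfl⟩ := mem_image.1 ht
  obtain ⟨htT, rfl⟩ := mem_filter.1 htz
  obtain ⟨s, hs, hst⟩ := hT htT k hk
  exact ⟨Fin.tail s, mem_image_of_mem _ (mem_filter.2 ⟨hs, hst 0⟩),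
    fun i hi => hst i.succ (by simpa [tailEdge] using hi)⟩

theorem card_image_tail_filter_apply_zero (T : Finset (Fin (n + 1) → β)) (z : β) :
    #({t ∈ T | t 0 = z}.image Fin.tail) = #{t ∈ T | t 0 = z} := by
  refine card_image_of_injOn fun t ht t' ht' h => ?_
  rw [mem_coe, mem_filter] at ht ht'
  rw [← Fin.cons_self_tail t, ← Fin.cons_self_tail t', h, ht.2, ht'.2]

theorem prod_card_tailRel_rpow_le {E : Finset κ} {W : κ → ℝ} (hW : ∀ k ∈ E, 0 ≤ W k)
    (R : κ → Finset (Fin (n + 1) → β)) (z : β) :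
    ∏ k ∈ E, (#(tailRel edge R z k) : ℝ) ^ W k ≤
      (∏ k ∈ E with 0 ∈ edge k, (#{s ∈ R k | s 0 = z} : ℝ) ^ W k) *
        ∏ k ∈ E with 0 ∉ edge k, (#(R k) : ℝ) ^ W k := by
  calc ∏ k ∈ E, (#(tailRel edge R z k) : ℝ) ^ W k
      ≤ ∏ k ∈ E, (#{s ∈ R k | 0 ∈ edge k → s 0 = z} : ℝ) ^ W k := by
        refine prod_le_prod (fun k _ => by positivity) fun k hk => ?_
        exact Real.rpow_le_rpow (by positivity) (by exact_mod_cast card_image_le) (hW k hk)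
    _ = _ := by
        rw [← prod_filter_mul_prod_filter_not E (0 ∈ edge ·)]
        congr 1 <;> refine prod_congr rfl fun k hk => ?_ <;> simp [(mem_filter.1 hk).2]

end VertexElimination

theorem card_le_prod_rpow_of_subset_join {n : ℕ} {E : Finset κ} {edge : κ → Finset (Fin n)}
    {W : κ → ℝ} (hW : IsFractionalEdgeCover E edge W) {R : κ → Finset (Fin n → β)}
    {T : Finset (Fin n → β)} (hT : ↑T ⊆ join E edge R) :
    (#T : ℝ) ≤ ∏ k ∈ E, (#(R k) : ℝ) ^ W k := by
  induction n with
  | zero =>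
    obtain rfl | ⟨t, ht⟩ := T.eq_empty_or_nonempty
    · simp only [card_empty, Nat.cast_zero]
      positivity
    calc (#T : ℝ) ≤ 1 := by exact_mod_cast card_le_one_of_subsingleton T
      _ ≤ ∏ k ∈ E, (#(R k) : ℝ) ^ W k := one_le_prod fun k hk => Real.one_le_rpow
          (by obtain ⟨s, hs, -⟩ := hT ht k hk; exact_mod_cast card_pos.2 ⟨s, hs⟩) (hW.1 k hk)
  | succ n ih =>
    set C := ∏ k ∈ E with 0 ∉ edge k, (#(R k) : ℝ) ^ W k
    have hslice : ∀ z, (#{t ∈ T | t 0 = z} : ℝ) ≤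
        (∏ k ∈ E with 0 ∈ edge k, (#{s ∈ R k | s 0 = z} : ℝ) ^ W k) * C := fun z => by
      rw [← card_image_tail_filter_apply_zero]
      exact (ih hW.tail (image_tail_filter_subset_join hT z)).trans
        (prod_card_tailRel_rpow_le hW.1 R z)
    have hfibers : ∀ k ∈ ({k ∈ E | 0 ∈ edge k} : Finset κ),
        ∑ z ∈ T.image (· 0), (#{s ∈ R k | s 0 = z} : ℝ) ≤ #(R k) := fun k _ => by
      exact_mod_cast (sum_card_fiberwise_eq_card_filter _ _ _).trans_le (card_filter_le _ _)
    calc (#T : ℝ) = ∑ z ∈ T.image (· 0), (#{t ∈ T | t 0 = z} : ℝ) := by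
          exact_mod_cast card_eq_sum_card_image _ _
      _ ≤ ∑ z ∈ T.image (· 0), (∏ k ∈ E with 0 ∈ edge k, (#{s ∈ R k | s 0 = z} : ℝ) ^ W k) * C :=
          sum_le_sum fun z _ => hslice z
      _ ≤ (∏ k ∈ E with 0 ∈ edge k, (#(R k) : ℝ) ^ W k) * C := by
          rw [← sum_mul]
          refine mul_le_mul_of_nonneg_right ?_ (prod_nonneg fun k _ => by positivity)
          exact Real.sum_prod_rpow_le_prod_rpow_of_sum_le _ _ _ _ _
            (fun _ _ _ _ => Nat.cast_nonneg _) hfibers (fun k hk => hW.1 k (mem_filter.1 hk).1)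
            (hW.2 0)
      _ = ∏ k ∈ E, (#(R k) : ℝ) ^ W k := prod_filter_mul_prod_filter_not _ _ _

theorem agm_bound_general
    (d : ℕ)
    (E : Finset (Finset (Fin d)))
    (R : Finset (Fin d) → Finset (Fin d → ℤ))
    (W : Finset (Fin d) → ℝ) (hW : ∀ e ∈ E, 0 ≤ W e)
    (hcov : ∀ i : Fin d, 1 ≤ ∑ e ∈ E.filter (fun e => i ∈ e), W e) :
    {t : Fin d → ℤ | ∀ e ∈ E, ∃ s ∈ R e, ∀ i ∈ e, s i = t i}.Finite ∧
      ({t : Fin d → ℤ | ∀ e ∈ E, ∃ s ∈ R e, ∀ i ∈ e, s i = t i}.ncard : ℝ)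
        ≤ ∏ e ∈ E, pow0 ((R e).card : ℝ) (W e) := by
  change (join E id R).Finite ∧ ((join E id R).ncard : ℝ) ≤ _
  have hE : IsFractionalEdgeCover E id W := ⟨hW, hcov⟩
  have hfin : (join E id R).Finite := join_finite hE.exists_mem_edge R
  refine ⟨hfin, ?_⟩
  obtain hempty | ⟨t, ht⟩ := (join E id R).eq_empty_or_nonempty
  · rw [hempty, Set.ncard_empty, Nat.cast_zero]
    refine prod_nonneg fun e _ => ?_
    unfold pow0
    split_ifs
    exacts [le_rfl, Real.rpow_nonneg (Nat.cast_nonneg _) _]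
  -- `pow0` differs from `rpow` only at base `0`, which a nonempty join rules out
  have hpow0 : ∀ e ∈ E, pow0 (#(R e)) (W e) = (#(R e) : ℝ) ^ W e := fun e he => by
    obtain ⟨s, hs, -⟩ := ht e he
    exact if_neg (Nat.cast_ne_zero.2 (card_ne_zero_of_mem hs))
  rw [prod_congr rfl hpow0, Set.ncard_eq_toFinset_card _ hfin]
  exact card_le_prod_rpow_of_subset_join hE (by simp)

theorem agm_bound
    (d : ℕ) (hd : 0 < d)
    (E : Finset (Finset (Fin d))) (hE : E.Nonempty) (hEne : ∀ e ∈ E, e.Nonempty)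
    (R : Finset (Fin d) → Finset (Fin d → ℤ))
    (W : Finset (Fin d) → ℝ) (hW : ∀ e ∈ E, 0 ≤ W e)
    (hcov : ∀ i : Fin d, 1 ≤ ∑ e ∈ E.filter (fun e => i ∈ e), W e) :
    {t : Fin d → ℤ | ∀ e ∈ E, ∃ s ∈ R e, ∀ i ∈ e, s i = t i}.Finite ∧
      ({t : Fin d → ℤ | ∀ e ∈ E, ∃ s ∈ R e, ∀ i ∈ e, s i = t i}.ncard : ℝ)
        ≤ ∏ e ∈ E, pow0 ((R e).card : ℝ) (W e) :=
  agm_bound_general d E R W hW hcov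
end

section
/- Let Q be a finite simple graph with at least one edge and no isolated vertices, and let W be a fractional edge cover of Q. Let G be a finite simple graph with m edges. Then the number of injective graph homomorphisms from Q to G (injective maps f from the vertices of Q to the vertices of G such that {f(a), f(b)} is an edge of G whenever {a,b} is an edge of Q) is at most ∏_{e ∈ E(Q)} (2m)^{W(e)}. -/
/-!
The number of homomorphisms `Q → G` is at most the sum over all maps `f` of
`∏_{e ∈ E(Q)} 1[f(e) ∈ E(G)] ^ W(e)`. Each factor depends only on the two endpoints of its edge,
so Finner's inequality for counting measures bounds this sum by
`∏_e (∑_{u,v} 1[uv ∈ E(G)]) ^ W(e) = ∏_e (2m) ^ W(e)`. Finner's inequality itself follows by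
summing out one vertex at a time: the edges through that vertex carry weights summing to at
least `1`, and on a counting measure Hölder's inequality holds for such weights because
`‖g‖_p ≤ ‖g‖_1` for `p ≥ 1`. Injective homomorphisms are in particular homomorphisms.
-/

open Classical

open MeasureTheory Finset Function
open scoped ENNReal

section CountingMeasure

variable {β : Type*} [MeasurableSpace β] [MeasurableSingletonClass β]

theorem le_lintegral_count (g : β → ℝ≥0∞) (y : β) : g y ≤ ∫⁻ z, g z ∂Measure.count := by
  rw [lintegral_count]
  exact ENNReal.le_tsum y

variable [Countable β]

theorem lintegral_count_rpow_le {p : ℝ} (hp : 1 ≤ p) (g : β → ℝ≥0∞) :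
    ∫⁻ y, g y ^ p ∂Measure.count ≤ (∫⁻ y, g y ∂Measure.count) ^ p := by
  set I := ∫⁻ y, g y ∂Measure.count
  have hsplit (c : ℝ≥0∞) : c ^ p = c ^ (p - 1) * c := by
    simpa using ENNReal.rpow_add_of_nonneg (x := c) (p - 1) 1 (by linarith) zero_le_one
  calc ∫⁻ y, g y ^ p ∂Measure.count
      ≤ ∫⁻ y, I ^ (p - 1) * g y ∂Measure.count := by
        refine lintegral_mono fun y => ?_
        rw [hsplit]
        gcongr
        exact le_lintegral_count g y
    _ = I ^ p := by
        rw [lintegral_const_mul _ (measurable_of_countable g), ← hsplit]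

theorem lintegral_count_prod_rpow_le {ι : Type*} (s : Finset ι) (H : ι → β → ℝ≥0∞)
    {w : ι → ℝ} (hw : ∀ i ∈ s, 0 ≤ w i) (hsum : 1 ≤ ∑ i ∈ s, w i) :
    ∫⁻ y, ∏ i ∈ s, H i y ^ w i ∂Measure.count ≤
      ∏ i ∈ s, (∫⁻ y, H i y ∂Measure.count) ^ w i := by
  set S := ∑ i ∈ s, w i
  have hS : 0 < S := by linarith
  have hw' : ∀ i ∈ s, 0 ≤ w i / S := fun i hi => div_nonneg (hw i hi) hS.le
  have hpow (c : ι → ℝ≥0∞) : ∏ i ∈ s, c i ^ w i = (∏ i ∈ s, c i ^ (w i / S)) ^ S := by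
    rw [← ENNReal.prod_rpow_of_nonneg hS.le]
    refine prod_congr rfl fun i _ => ?_
    rw [← ENNReal.rpow_mul, div_mul_cancel₀ _ hS.ne']
  simp_rw [hpow]
  calc ∫⁻ y, (∏ i ∈ s, H i y ^ (w i / S)) ^ S ∂Measure.count
      ≤ (∫⁻ y, ∏ i ∈ s, H i y ^ (w i / S) ∂Measure.count) ^ S :=
        lintegral_count_rpow_le hsum _
    _ ≤ (∏ i ∈ s, (∫⁻ y, H i y ∂Measure.count) ^ (w i / S)) ^ S := by
        gcongr
        refine ENNReal.lintegral_prod_norm_pow_le s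
          (fun i _ => (measurable_of_countable _).aemeasurable) ?_ hw'
        rw [← sum_div, div_self hS.ne']

end CountingMeasure

theorem DependsOn.lmarginal_update_of_notMem {δ : Type*} [DecidableEq δ] {X : δ → Type*}
    [∀ i, MeasurableSpace (X i)] {μ : ∀ i, Measure (X i)} {f : (∀ i, X i) → ℝ≥0∞} {A : Set δ}
    (hf : DependsOn f A) {i : δ} (hi : i ∉ A) (s : Finset δ) (x : ∀ i, X i) (y : X i) :
    (∫⋯∫⁻_s, f ∂μ) (Function.update x i y) = (∫⋯∫⁻_s, f ∂μ) x := by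
  refine lintegral_congr fun z => hf fun j hj => ?_
  have hji : j ≠ i := ne_of_mem_of_not_mem hj hi
  simp [updateFinset_def, hji]

section Finner

variable {α β : Type*} [DecidableEq α] [Finite α]
  [MeasurableSpace β] [MeasurableSingletonClass β] [Countable β]

/-- Finner's inequality for counting measures. -/
theorem lmarginal_count_prod_rpow_le {ι : Type*} (s : Finset ι) (A : ι → Finset α)
    (F : ι → (α → β) → ℝ≥0∞) (hF : ∀ i ∈ s, DependsOn (F i) (A i))
    {w : ι → ℝ} (hw : ∀ i ∈ s, 0 ≤ w i) {T : Finset α}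
    (hcov : ∀ x ∈ T, 1 ≤ ∑ i ∈ s with x ∈ A i, w i) (f₀ : α → β) :
    (∫⋯∫⁻_T, (fun f => ∏ i ∈ s, F i f ^ w i) ∂fun _ => Measure.count) f₀ ≤
      ∏ i ∈ s, ((∫⋯∫⁻_(A i ∩ T), F i ∂fun _ => Measure.count) f₀) ^ w i := by
  induction T using Finset.induction generalizing f₀ with
  | empty => simp
  | insert x T hx ih =>
    set M : ι → (α → β) → ℝ≥0∞ := fun i => ∫⋯∫⁻_(A i ∩ T), F i ∂fun _ => Measure.count
    have hM_notMem (i : ι) (hi : i ∈ s) (hxi : x ∉ A i) (y : β) : M i (update f₀ x y) = M i f₀ :=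
      (hF i hi).lmarginal_update_of_notMem (by simpa using hxi) _ f₀ y
    rw [lmarginal_insert _ (measurable_of_countable _) hx,
      ← prod_filter_mul_prod_filter_not s (x ∈ A ·)]
    calc ∫⁻ y, (∫⋯∫⁻_T, (fun f => ∏ i ∈ s, F i f ^ w i) ∂fun _ => Measure.count)
            (update f₀ x y) ∂Measure.count
        ≤ ∫⁻ y, ∏ i ∈ s, M i (update f₀ x y) ^ w i ∂Measure.count :=
          lintegral_mono fun y => ih (fun z hz => hcov z (mem_insert_of_mem hz)) _
      _ = ∫⁻ y, (∏ i ∈ s with x ∈ A i, M i (update f₀ x y) ^ w i) *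
            ∏ i ∈ s with x ∉ A i, M i f₀ ^ w i ∂Measure.count := by
          refine lintegral_congr fun y => ?_
          rw [← prod_filter_mul_prod_filter_not s (x ∈ A ·)]
          congr 1
          refine prod_congr rfl fun i hi => ?_
          obtain ⟨his, hxi⟩ := mem_filter.mp hi
          rw [hM_notMem i his hxi]
      _ = (∫⁻ y, ∏ i ∈ s with x ∈ A i, M i (update f₀ x y) ^ w i ∂Measure.count) *
            ∏ i ∈ s with x ∉ A i, M i f₀ ^ w i :=
          lintegral_mul_const _ (measurable_of_countable _)
      _ ≤ (∏ i ∈ s with x ∈ A i, (∫⁻ y, M i (update f₀ x y) ∂Measure.count) ^ w i) *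
            ∏ i ∈ s with x ∉ A i, M i f₀ ^ w i := by
          gcongr
          exact lintegral_count_prod_rpow_le _ _ (fun i hi => hw i (mem_filter.mp hi).1)
            (hcov x (mem_insert_self x T))
      _ = _ := by
          congr 1 <;> refine prod_congr rfl fun i hi => ?_
          · rw [inter_insert_of_mem (mem_filter.mp hi).2, lmarginal_insert _
              (measurable_of_countable _) fun h => hx (mem_of_mem_inter_right h)]
          · rw [inter_insert_of_notMem (mem_filter.mp hi).2]

end Finner

section CountingMarginals

variable {α β : Type*} [DecidableEq α] [Fintype α] [Fintype β]
  [MeasurableSpace β] [MeasurableSingletonClass β]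

theorem lmarginal_count_univ (g : (α → β) → ℝ≥0∞) (f₀ : α → β) :
    (∫⋯∫⁻_univ, g ∂fun _ => Measure.count) f₀ = ∑ f, g f := by
  simp [lintegral_fintype]

theorem lmarginal_count_pair {a b : α} (hab : a ≠ b) (φ : β → β → ℝ≥0∞) (f₀ : α → β) :
    (∫⋯∫⁻_{a, b}, (fun f => φ (f a) (f b)) ∂fun _ => Measure.count) f₀ = ∑ u, ∑ v, φ u v := by
  rw [lmarginal_insert _ (measurable_of_countable _) (by simpa using hab), lintegral_fintype]
  refine sum_congr rfl fun u _ => ?_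
  simp [lmarginal_singleton, lintegral_fintype, update_of_ne hab]

end CountingMarginals

namespace SimpleGraph

variable {α β : Type*} [Fintype α] [DecidableEq α] [Fintype β]

theorem lmarginal_count_indicator_edgeSet (G : SimpleGraph β) [DecidableRel G.Adj]
    [MeasurableSpace β] [MeasurableSingletonClass β] {e : Sym2 α} (he : ¬e.IsDiag)
    (f₀ : α → β) :
    (∫⋯∫⁻_e.toFinset, (fun f => G.edgeSet.indicator 1 (e.map f))
        ∂fun _ => Measure.count) f₀ = (2 * #G.edgeFinset : ℕ) := by
  induction e using Sym2.ind with
  | _ a b =>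
  simp only [Sym2.toFinset_mk_eq, Sym2.map_mk]
  rw [lmarginal_count_pair (φ := fun u v => G.edgeSet.indicator 1 s(u, v)) (by simpa using he),
    ← sum_degrees_eq_twice_card_edges, Nat.cast_sum]
  refine sum_congr rfl fun u _ => ?_
  simp [Set.indicator_apply, ← card_neighborFinset_eq_degree, neighborFinset_eq_filter]

theorem ncard_hom_le_prod_rpow (Q : SimpleGraph α) [DecidableRel Q.Adj]
    (G : SimpleGraph β) [DecidableRel G.Adj] (W : Sym2 α → ℝ)
    (hW : ∀ e ∈ Q.edgeFinset, 0 ≤ W e)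
    (hcov : ∀ x, 1 ≤ ∑ e ∈ Q.edgeFinset with x ∈ e, W e) :
    ({f : α → β | ∀ a b, Q.Adj a b → G.Adj (f a) (f b)}.ncard : ℝ≥0∞) ≤
      ∏ e ∈ Q.edgeFinset, ((2 * #G.edgeFinset : ℕ) : ℝ≥0∞) ^ W e := by
  let : MeasurableSpace β := ⊤
  have : MeasurableSingletonClass β := ⟨fun _ => MeasurableSpace.measurableSet_top⟩
  rcases isEmpty_or_nonempty (α → β) with hempty | ⟨⟨f₀⟩⟩
  · simp [Set.eq_empty_of_isEmpty]
  set homs := {f : α → β | ∀ a b, Q.Adj a b → G.Adj (f a) (f b)}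
  set F : Sym2 α → (α → β) → ℝ≥0∞ := fun e f => G.edgeSet.indicator 1 (e.map f)
  have hF (e : Sym2 α) : DependsOn (F e) e.toFinset := fun f g hfg => by
    simp only [F, Sym2.map_congr fun x hx => hfg x (by simpa using hx)]
  have hF_hom (f : α → β) (hf : f ∈ homs) (e : Sym2 α) (he : e ∈ Q.edgeFinset) : F e f = 1 := by
    induction e using Sym2.ind with
    | _ a b => simp [F, hf a b (by simpa using he)]
  have hcount : (homs.ncard : ℝ≥0∞) ≤ ∑ f, ∏ e ∈ Q.edgeFinset, F e f ^ W e := by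
    rw [Set.ncard_eq_toFinset_card', card_eq_sum_ones, Nat.cast_sum, Nat.cast_one]
    calc ∑ f ∈ homs.toFinset, (1 : ℝ≥0∞)
        = ∑ f ∈ homs.toFinset, ∏ e ∈ Q.edgeFinset, F e f ^ W e := by
          refine sum_congr rfl fun f hf => (prod_eq_one fun e he => ?_).symm
          rw [hF_hom f (Set.mem_toFinset.mp hf) e he, ENNReal.one_rpow]
      _ ≤ ∑ f, ∏ e ∈ Q.edgeFinset, F e f ^ W e := sum_le_sum_of_subset (subset_univ _)
  calc (homs.ncard : ℝ≥0∞)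
      ≤ (∫⋯∫⁻_univ, (fun f => ∏ e ∈ Q.edgeFinset, F e f ^ W e) ∂fun _ => Measure.count) f₀ := by
        rwa [lmarginal_count_univ]
    _ ≤ ∏ e ∈ Q.edgeFinset, ((∫⋯∫⁻_(e.toFinset ∩ univ), F e ∂fun _ => Measure.count) f₀) ^ W e :=
        lmarginal_count_prod_rpow_le _ _ F (fun e _ => hF e) hW
          (fun x _ => by simpa [Sym2.mem_toFinset] using hcov x) f₀
    _ = ∏ e ∈ Q.edgeFinset, ((2 * #G.edgeFinset : ℕ) : ℝ≥0∞) ^ W e := by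
        refine prod_congr rfl fun e he => ?_
        rw [inter_univ, lmarginal_count_indicator_edgeSet G (Q.not_isDiag_of_mem_edgeSet
          (mem_edgeFinset.mp he))]

end SimpleGraph

theorem injective_hom_count_agm_bound_general
    {α β : Type} [Fintype α] [Fintype β] [DecidableEq α]
    (Q : SimpleGraph α) [DecidableRel Q.Adj]
    (G : SimpleGraph β) [DecidableRel G.Adj]
    (hQedge : Q.edgeFinset.Nonempty)
    (W : Sym2 α → ℝ)
    (hW : ∀ e ∈ Q.edgeFinset, 0 ≤ W e)
    (hcov : ∀ x : α, 1 ≤ ∑ e ∈ Q.edgeFinset.filter (fun e => x ∈ e), W e) :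
    ({f : α → β | Function.Injective f ∧ ∀ a b : α, Q.Adj a b → G.Adj (f a) (f b)}.ncard : ℝ)
      ≤ ∏ e ∈ Q.edgeFinset, pow0 ((2 * G.edgeFinset.card : ℕ) : ℝ) (W e) := by
  set homs := {f : α → β | ∀ a b, Q.Adj a b → G.Adj (f a) (f b)}
  have hinj : ({f : α → β | Injective f ∧ ∀ a b, Q.Adj a b → G.Adj (f a) (f b)}.ncard : ℝ) ≤
      homs.ncard := by
    exact_mod_cast Set.ncard_le_ncard (fun f (hf : Injective f ∧ _) => hf.2) (Set.toFinite homs)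
  rcases Nat.eq_zero_or_pos #G.edgeFinset with hG | hG
  · obtain ⟨e, he⟩ := hQedge
    have hempty : homs = ∅ := by
      refine Set.eq_empty_of_forall_notMem fun f hf => ?_
      induction e using Sym2.ind with
      | _ a b =>
        have hab : s(f a, f b) ∈ G.edgeFinset :=
          SimpleGraph.mem_edgeFinset.mpr (hf a b (by simpa using he))
        simp [card_eq_zero.mp hG] at hab
    rw [hempty, Set.ncard_empty, Nat.cast_zero] at hinj
    refine hinj.trans_eq (prod_eq_zero he ?_).symm
    simp [pow0, hG]
  have hbound := ENNReal.toReal_mono (ENNReal.prod_ne_top fun e he =>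
      ENNReal.rpow_ne_top_of_nonneg (hW e he) (ENNReal.natCast_ne_top _))
    (SimpleGraph.ncard_hom_le_prod_rpow Q G W hW hcov)
  rw [ENNReal.toReal_natCast, ENNReal.toReal_prod] at hbound
  refine hinj.trans (hbound.trans_eq (prod_congr rfl fun e _ => ?_))
  rw [← ENNReal.toReal_rpow, ENNReal.toReal_natCast, pow0, if_neg (by positivity)]
  rfl

theorem injective_hom_count_agm_bound
    {α β : Type} [Fintype α] [Fintype β] [DecidableEq α] [DecidableEq β]
    (Q : SimpleGraph α) [DecidableRel Q.Adj]
    (G : SimpleGraph β) [DecidableRel G.Adj]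
    (hQedge : Q.edgeFinset.Nonempty)
    (hQiso : ∀ x : α, ∃ y : α, Q.Adj x y)
    (W : Sym2 α → ℝ)
    (hW : ∀ e ∈ Q.edgeFinset, 0 ≤ W e)
    (hcov : ∀ x : α, 1 ≤ ∑ e ∈ Q.edgeFinset.filter (fun e => x ∈ e), W e) :
    ({f : α → β | Function.Injective f ∧ ∀ a b : α, Q.Adj a b → G.Adj (f a) (f b)}.ncard : ℝ)
      ≤ ∏ e ∈ Q.edgeFinset, pow0 ((2 * G.edgeFinset.card : ℕ) : ℝ) (W e) :=
  injective_hom_count_agm_bound_general Q G hQedge W hW hcov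
end

section
/- Let V be a finite set of size n ≥ 1 equipped with an injective attribute function A : V → ℝ. Then there exists a finite family 𝒞 of nonempty subsets of V such that: (i) every element of V belongs to at most 1 + ⌈log₂ n⌉ members of 𝒞; and (ii) for every pair of reals x ≤ y, the set {v ∈ V : x ≤ A(v) ≤ y} is the union of at most 2·(1 + ⌈log₂ n⌉) pairwise disjoint members of 𝒞. (Consequently, ∑_{U ∈ 𝒞} |U| ≤ n·(1 + ⌈log₂ n⌉).) -/
/-!
Replace each element by its rank `r v = #{w | A w < A v}`; the window `x ≤ A v ≤ y` then becomes
the rank interval `#{w | A w < x} ≤ r v < #{w | A w ≤ y}`. The canonical sets are the dyadic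
blocks `{v | r v / 2 ^ k = i}` with `2 ^ k ≤ n`, so each element lies in one block per level.
An interval `[a, b)` of ranks with `b < 2 ^ k` splits into at most `2 k` disjoint dyadic blocks:
peel off the odd endpoints as singletons and split `[⌈a / 2⌉, ⌊b / 2⌋)` one level up.
-/

open Finset

def dyadicBlock (p : ℕ × ℕ) : Finset ℕ := Ico (p.2 * 2 ^ p.1) ((p.2 + 1) * 2 ^ p.1)

lemma mem_dyadicBlock {m : ℕ} {p : ℕ × ℕ} : m ∈ dyadicBlock p ↔ m / 2 ^ p.1 = p.2 := by
  have h2 : 0 < 2 ^ p.1 := by positivity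
  rw [dyadicBlock, mem_Ico, ← Nat.le_div_iff_mul_le h2, ← Nat.div_lt_iff_lt_mul h2]
  omega

lemma card_dyadicBlock (p : ℕ × ℕ) : #(dyadicBlock p) = 2 ^ p.1 := by
  rw [dyadicBlock, Nat.card_Ico, add_mul, one_mul, Nat.add_sub_cancel_left]

lemma mem_dyadicBlock_succ {m : ℕ} {p : ℕ × ℕ} :
    m ∈ dyadicBlock (p.1 + 1, p.2) ↔ m / 2 ∈ dyadicBlock p := by
  simp only [mem_dyadicBlock, pow_succ', ← Nat.div_div_eq_div_mul]

def IsDyadicPartition (S : Finset (ℕ × ℕ)) (X : Finset ℕ) : Prop :=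
  (S : Set (ℕ × ℕ)).PairwiseDisjoint dyadicBlock ∧ S.biUnion dyadicBlock = X

namespace IsDyadicPartition

variable {S : Finset (ℕ × ℕ)} {X : Finset ℕ}

lemma subset (h : IsDyadicPartition S X) {p : ℕ × ℕ} (hp : p ∈ S) : dyadicBlock p ⊆ X :=
  h.2 ▸ subset_biUnion_of_mem dyadicBlock hp

lemma double {a b : ℕ} (h : IsDyadicPartition S (Ico a b)) :
    IsDyadicPartition (S.image fun p => (p.1 + 1, p.2)) (Ico (2 * a) (2 * b)) := by
  have hinj : Set.InjOn (fun p : ℕ × ℕ => (p.1 + 1, p.2)) S := fun p _ q _ hpq => by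
    simpa [Prod.ext_iff] using hpq
  refine ⟨?_, ?_⟩
  · rw [coe_image, hinj.pairwiseDisjoint_image]
    intro p hp q hq hpq
    simp only [Function.comp_apply, disjoint_left, mem_dyadicBlock_succ]
    exact fun m hm => disjoint_left.mp (h.1 hp hq hpq) hm
  · ext m
    have := congrArg (m / 2 ∈ ·) h.2
    simp only [eq_iff_iff, mem_biUnion, mem_Ico] at this
    simp only [mem_biUnion, mem_image, exists_exists_and_eq_and, mem_dyadicBlock_succ, this,
      mem_Ico]
    omega

lemma union_singletons {Y : Finset ℕ} (h : IsDyadicPartition S X) (hXY : X ⊆ Y) :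
    IsDyadicPartition (S ∪ (Y \ X).image fun m => (0, m)) Y := by
  have hsingleton (m : ℕ) : dyadicBlock (0, m) = {m} := by
    simp [dyadicBlock]
  refine ⟨?_, ?_⟩
  · rw [coe_union]
    refine h.1.union ?_ ?_
    · rw [coe_image, (Prod.mk_right_injective 0).injOn.pairwiseDisjoint_image]
      intro m _ m' _ hmm'
      simpa [Function.comp_def, hsingleton] using hmm'
    · intro p hp q hq _
      obtain ⟨m, hm, rfl⟩ := mem_image.mp (mem_coe.mp hq)
      rw [hsingleton, disjoint_singleton_right]
      exact fun hmp => (mem_sdiff.mp hm).2 (h.subset hp hmp)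
  · rw [union_biUnion, h.2, image_biUnion]
    simp only [hsingleton, biUnion_singleton_eq_self]
    exact union_sdiff_of_subset hXY

end IsDyadicPartition

theorem exists_isDyadicPartition_Ico (k a b : ℕ) (hb : b < 2 ^ k) :
    ∃ S, #S ≤ 2 * k ∧ IsDyadicPartition S (Ico a b) := by
  induction k generalizing a b with
  | zero =>
    refine ⟨∅, by simp, by simp, ?_⟩
    simp [show b = 0 by omega]
  | succ k ih =>
    obtain ⟨S, hcard, hS⟩ := ih ((a + 1) / 2) (b / 2) (by omega)
    have hsub : Ico (2 * ((a + 1) / 2)) (2 * (b / 2)) ⊆ Ico a b :=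
      Ico_subset_Ico (by omega) (by omega)
    refine ⟨_, ?_, hS.double.union_singletons hsub⟩
    have hends : #(Ico a b \ Ico (2 * ((a + 1) / 2)) (2 * (b / 2))) ≤ 2 := by
      rw [card_sdiff_of_subset hsub, Nat.card_Ico, Nat.card_Ico]
      omega
    calc _ ≤ #S + #(Ico a b \ Ico (2 * ((a + 1) / 2)) (2 * (b / 2))) :=
          (card_union_le _ _).trans (add_le_add card_image_le card_image_le)
      _ ≤ 2 * (k + 1) := by omega

section Rank

variable {V α : Type*} [Fintype V] [LinearOrder α] (f : V → α)

def rank (v : V) : ℕ := #{w | f w < f v}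

lemma rank_lt_card_filter_iff {s : Set α} [DecidablePred (· ∈ s)] (hs : IsLowerSet s) (v : V) :
    rank f v < #{w | f w ∈ s} ↔ f v ∈ s := by
  constructor
  · intro hlt
    by_contra hv
    refine hlt.not_ge (card_le_card fun w hw => ?_)
    simp only [mem_filter, mem_univ, true_and] at hw ⊢
    exact lt_of_not_ge fun hvw => hv (hs hvw hw)
  · intro hv
    refine card_lt_card ((ssubset_iff_of_subset fun w hw => ?_).mpr ⟨v, by simpa, by simp⟩)
    simp only [mem_filter, mem_univ, true_and] at hw ⊢
    exact hs hw.le hv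

lemma rank_mem_Ico_iff (x y : α) (v : V) :
    rank f v ∈ Ico #{w | f w < x} #{w | f w ≤ y} ↔ x ≤ f v ∧ f v ≤ y := by
  rw [mem_Ico, ← not_lt]
  exact and_congr ((rank_lt_card_filter_iff f (isLowerSet_Iio x) v).not.trans not_lt)
    (rank_lt_card_filter_iff f (isLowerSet_Iic y) v)

def rankBlock (p : ℕ × ℕ) : Finset V := {v | rank f v ∈ dyadicBlock p}

lemma mem_rankBlock {v : V} {p : ℕ × ℕ} :
    v ∈ rankBlock f p ↔ rank f v / 2 ^ p.1 = p.2 := by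
  rw [rankBlock, mem_filter, mem_dyadicBlock, and_iff_right (mem_univ v)]

lemma disjoint_rankBlock {p q : ℕ × ℕ} (h : Disjoint (dyadicBlock p) (dyadicBlock q)) :
    Disjoint (rankBlock f p) (rankBlock f q) :=
  disjoint_left.mpr fun _ hp hq => disjoint_left.mp h (mem_filter.mp hp).2 (mem_filter.mp hq).2

def canonicalCollection [DecidableEq V] : Finset (Finset V) :=
  (range (Nat.log 2 (Fintype.card V) + 1) ×ˢ univ).image
    fun kv => rankBlock f (kv.1, rank f kv.2 / 2 ^ kv.1)

lemma nonempty_of_mem_canonicalCollection [DecidableEq V] {U : Finset V}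
    (hU : U ∈ canonicalCollection f) : U.Nonempty := by
  obtain ⟨⟨k, v⟩, -, rfl⟩ := mem_image.mp hU
  exact ⟨v, (mem_rankBlock f).mpr rfl⟩

lemma rankBlock_mem_canonicalCollection [DecidableEq V] {p : ℕ × ℕ}
    (hp : 2 ^ p.1 ≤ Fintype.card V) (hne : (rankBlock f p).Nonempty) :
    rankBlock f p ∈ canonicalCollection f := by
  obtain ⟨v, hv⟩ := hne
  refine mem_image.mpr ⟨(p.1, v), mem_product.mpr ⟨?_, mem_univ v⟩, ?_⟩
  · exact mem_range_succ_iff.mpr (Nat.le_log_of_pow_le one_lt_two hp)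
  · rw [(mem_rankBlock f).mp hv]

lemma card_filter_mem_canonicalCollection_le [DecidableEq V] (v : V) :
    #{U ∈ canonicalCollection f | v ∈ U} ≤ Nat.log 2 (Fintype.card V) + 1 := by
  calc #{U ∈ canonicalCollection f | v ∈ U}
      ≤ #((range (Nat.log 2 (Fintype.card V) + 1)).image
          fun k => rankBlock f (k, rank f v / 2 ^ k)) := by
        refine card_le_card fun U hU => ?_
        obtain ⟨hU, hvU⟩ := mem_filter.mp hU
        obtain ⟨⟨k, w⟩, hkw, rfl⟩ := mem_image.mp hU
        refine mem_image.mpr ⟨k, (mem_product.mp hkw).1, ?_⟩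
        rw [(mem_rankBlock f).mp hvU]
    _ ≤ Nat.log 2 (Fintype.card V) + 1 := card_image_le.trans (card_range _).le

lemma exists_disjoint_cover [DecidableEq V] (x y : α) :
    ∃ D ⊆ canonicalCollection f, (D : Set (Finset V)).PairwiseDisjoint id ∧
      univ.filter (fun v => x ≤ f v ∧ f v ≤ y) = D.biUnion id ∧
      #D ≤ 2 * (Nat.log 2 (Fintype.card V) + 1) := by
  set n := Fintype.card V
  have hb : #{w | f w ≤ y} < 2 ^ (Nat.log 2 n + 1) :=
    (card_filter_le _ _).trans_lt (Nat.lt_pow_succ_log_self one_lt_two n)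
  obtain ⟨S, hcard, hS⟩ := exists_isDyadicPartition_Ico _ #{w | f w < x} _ hb
  refine ⟨{U ∈ S.image (rankBlock f) | U.Nonempty}, ?_, ?_, ?_, ?_⟩
  · intro U hU
    obtain ⟨hU, hne⟩ := mem_filter.mp hU
    obtain ⟨p, hp, rfl⟩ := mem_image.mp hU
    refine rankBlock_mem_canonicalCollection f ?_ hne
    calc 2 ^ p.1 = #(dyadicBlock p) := (card_dyadicBlock p).symm
      _ ≤ #(Ico #{w | f w < x} #{w | f w ≤ y}) := card_le_card (hS.subset hp)
      _ ≤ n := by rw [Nat.card_Ico]; exact (Nat.sub_le _ _).trans (card_filter_le _ _)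
  · intro U hU U' hU' hUU'
    obtain ⟨p, hp, rfl⟩ := mem_image.mp (mem_filter.mp (mem_coe.mp hU)).1
    obtain ⟨q, hq, rfl⟩ := mem_image.mp (mem_filter.mp (mem_coe.mp hU')).1
    exact disjoint_rankBlock f (hS.1 hp hq fun hpq => hUU' (hpq ▸ rfl))
  · ext v
    rw [mem_filter, and_iff_right (mem_univ v), mem_biUnion, ← rank_mem_Ico_iff, ← hS.2,
      mem_biUnion]
    constructor
    · rintro ⟨p, hp, hv⟩
      have hv' : v ∈ rankBlock f p := mem_filter.mpr ⟨mem_univ v, hv⟩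
      exact ⟨rankBlock f p, mem_filter.mpr ⟨mem_image_of_mem _ hp, v, hv'⟩, hv'⟩
    · rintro ⟨U, hU, hv⟩
      obtain ⟨p, hp, rfl⟩ := mem_image.mp (mem_filter.mp hU).1
      exact ⟨p, hp, (mem_filter.mp hv).2⟩
  · exact (card_filter_le _ _).trans (card_image_le.trans hcard)

end Rank

open Classical

theorem canonical_collection_exists_general
    {V : Type} [Fintype V] [DecidableEq V]
    (A : V → ℝ) :
    ∃ 𝒞 : Finset (Finset V),
      (∀ U ∈ 𝒞, U.Nonempty) ∧
      (∀ v : V, ((𝒞.filter (fun U => v ∈ U)).card : ℤ)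
          ≤ 1 + ⌈Real.logb 2 (Fintype.card V)⌉) ∧
      (∀ x y : ℝ, x ≤ y →
        ∃ D : Finset (Finset V), D ⊆ 𝒞 ∧
          ((D : Set (Finset V)).Pairwise fun U U' => Disjoint U U') ∧
          Finset.univ.filter (fun v => x ≤ A v ∧ A v ≤ y) = D.biUnion id ∧
          (D.card : ℤ) ≤ 2 * (1 + ⌈Real.logb 2 (Fintype.card V)⌉)) ∧
      (∑ U ∈ 𝒞, (U.card : ℤ))
        ≤ (Fintype.card V : ℤ) * (1 + ⌈Real.logb 2 (Fintype.card V)⌉) := by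
  have hlog : (Nat.log 2 (Fintype.card V) : ℤ) ≤ ⌈Real.logb 2 (Fintype.card V)⌉ :=
    Int.cast_le.mp ((Real.natLog_le_logb _ _).trans (Int.le_ceil _))
  refine ⟨canonicalCollection A, fun U => nonempty_of_mem_canonicalCollection A,
    fun v => ?_, fun x y _ => ?_, ?_⟩
  · have := card_filter_mem_canonicalCollection_le A v
    omega
  · obtain ⟨D, hD, hdisj, hunion, hcard⟩ := exists_disjoint_cover A x y
    exact ⟨D, hD, hdisj, hunion, by omega⟩
  · have := sum_card_le (card_filter_mem_canonicalCollection_le A)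
    calc ∑ U ∈ canonicalCollection A, (#U : ℤ)
        ≤ (Fintype.card V * (Nat.log 2 (Fintype.card V) + 1) : ℕ) := by exact_mod_cast this
      _ ≤ _ := by rw [Nat.cast_mul]; gcongr; push_cast; omega

theorem canonical_collection_exists
    {V : Type} [Fintype V] [DecidableEq V]
    (hn : 1 ≤ Fintype.card V)
    (A : V → ℝ) (hA : Function.Injective A) :
    ∃ 𝒞 : Finset (Finset V),
      (∀ U ∈ 𝒞, U.Nonempty) ∧
      (∀ v : V, ((𝒞.filter (fun U => v ∈ U)).card : ℤ)
          ≤ 1 + ⌈Real.logb 2 (Fintype.card V)⌉) ∧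
      (∀ x y : ℝ, x ≤ y →
        ∃ D : Finset (Finset V), D ⊆ 𝒞 ∧
          ((D : Set (Finset V)).Pairwise fun U U' => Disjoint U U') ∧
          Finset.univ.filter (fun v => x ≤ A v ∧ A v ≤ y) = D.biUnion id ∧
          (D.card : ℤ) ≤ 2 * (1 + ⌈Real.logb 2 (Fintype.card V)⌉)) ∧
      (∑ U ∈ 𝒞, (U.card : ℤ))
        ≤ (Fintype.card V : ℤ) * (1 + ⌈Real.logb 2 (Fintype.card V)⌉) :=
  canonical_collection_exists_general A
end

section
/- Let G be a finite simple graph whose vertices carry real attributes via an injective function A, let ℓ ≥ 1 and 1 ≤ r ≤ ℓ+1 be integers, and let u be a vertex of G. A rank-r ℓ-star centered at u is a set {u, v₁, …, v_ℓ} where v₁, …, v_ℓ are ℓ distinct neighbors of u and exactly r−1 of them have attribute smaller than A(u). Suppose at least one rank-r ℓ-star centered at u exists in G; let α* be the maximum, over all rank-r ℓ-stars centered at u in G, of the minimum attribute among the star's ℓ+1 vertices, and let β* be the minimum, over all such stars, of the maximum attribute among the star's ℓ+1 vertices. Then for all reals x₁ ≤ x₂, there exists a rank-r ℓ-star centered at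 u all of whose ℓ+1 vertices have attributes in [x₁, x₂] if and only if x₁ ≤ α* and β* ≤ x₂. -/
/-- `IsRankStar G A r ℓ u vs` means that `{u} ∪ vs` is a rank-`r` `ℓ`-star
centered at `u`: the leaves `vs` are `ℓ` distinct neighbors of `u` and exactly
`r - 1` of them have attribute smaller than `A u`. -/
def IsRankStar {V : Type} [Fintype V] [DecidableEq V]
    (G : SimpleGraph V) [DecidableRel G.Adj] (A : V → ℝ)
    (r ℓ : ℕ) (u : V) (vs : Finset V) : Prop :=
  vs ⊆ G.neighborFinset u ∧ vs.card = ℓ ∧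
    (vs.filter (fun v => A v < A u)).card = r - 1

lemma exists_topk {V : Type} [DecidableEq V] (A : V → ℝ) :
    ∀ (k : ℕ) (s : Finset V), k ≤ s.card →
      ∃ t, t ⊆ s ∧ t.card = k ∧ ∀ x ∈ t, ∀ y ∈ s, y ∉ t → A y ≤ A x := by
  intro k
  induction k with
  | zero =>
    intro s _
    exact ⟨∅, by simp, by simp, by simp⟩
  | succ k ih =>
    intro s hs
    have hne : s.Nonempty := Finset.card_pos.mp (by omega)
    obtain ⟨m, hm, hmax⟩ := s.exists_max_image A hne
    have hcard : k ≤ (s.erase m).card := by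
      rw [Finset.card_erase_of_mem hm]; omega
    obtain ⟨t, hts, htc, htop⟩ := ih (s.erase m) hcard
    have hmt : m ∉ t := fun h => (Finset.mem_erase.mp (hts h)).1 rfl
    refine ⟨insert m t, ?_, ?_, ?_⟩
    · intro x hx
      rcases Finset.mem_insert.mp hx with rfl | hx
      · exact hm
      · exact Finset.mem_of_mem_erase (hts hx)
    · rw [Finset.card_insert_of_notMem hmt, htc]
    · intro x hx y hy hyn
      rcases Finset.mem_insert.mp hx with rfl | hx
      · exact hmax y hy
      · have hy' : y ∈ s.erase m :=
          Finset.mem_erase.mpr ⟨fun h => hyn (h ▸ Finset.mem_insert_self m t), hy⟩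
        exact htop x hx y hy' (fun h => hyn (Finset.mem_insert_of_mem h))

lemma exists_botk {V : Type} [DecidableEq V] (A : V → ℝ) (k : ℕ) (s : Finset V)
    (hk : k ≤ s.card) :
    ∃ t, t ⊆ s ∧ t.card = k ∧ ∀ x ∈ t, ∀ y ∈ s, y ∉ t → A x ≤ A y := by
  obtain ⟨t, h1, h2, h3⟩ := exists_topk (fun v => -A v) k s hk
  exact ⟨t, h1, h2, fun x hx y hy hyn => by
    have := h3 x hx y hy hyn; simpa using this⟩

theorem rank_r_star_sentinel_characterization
    {V : Type} [Fintype V] [DecidableEq V]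
    (G : SimpleGraph V) [DecidableRel G.Adj]
    (A : V → ℝ) (hA : Function.Injective A)
    (ℓ r : ℕ) (hℓ : 1 ≤ ℓ) (hr1 : 1 ≤ r) (hr2 : r ≤ ℓ + 1)
    (u : V) (α β : ℝ)
    (hα1 : ∃ vs : Finset V, IsRankStar G A r ℓ u vs ∧
        (insert u vs).inf' (Finset.insert_nonempty u vs) A = α)
    (hα2 : ∀ vs : Finset V, IsRankStar G A r ℓ u vs →
        (insert u vs).inf' (Finset.insert_nonempty u vs) A ≤ α)
    (hβ1 : ∃ vs : Finset V, IsRankStar G A r ℓ u vs ∧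
        (insert u vs).sup' (Finset.insert_nonempty u vs) A = β)
    (hβ2 : ∀ vs : Finset V, IsRankStar G A r ℓ u vs →
        β ≤ (insert u vs).sup' (Finset.insert_nonempty u vs) A) :
    ∀ x₁ x₂ : ℝ, x₁ ≤ x₂ →
      ((∃ vs : Finset V, IsRankStar G A r ℓ u vs ∧
          ∀ v ∈ insert u vs, x₁ ≤ A v ∧ A v ≤ x₂)
        ↔ (x₁ ≤ α ∧ β ≤ x₂)) := by
  classical
  -- for any star, leaves have attribute ≠ A u
  have hneq : ∀ vs : Finset V, IsRankStar G A r ℓ u vs → ∀ v ∈ vs, A v ≠ A u := by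
    intro vs hvs v hv hEq
    have hv' : v ∈ G.neighborFinset u := hvs.1 hv
    have hadj : G.Adj u v := by simpa using hv'
    exact hadj.ne' (hA hEq)
  -- count of leaves above
  have hgt : ∀ vs : Finset V, IsRankStar G A r ℓ u vs →
      (vs.filter (fun v => A u < A v)).card = ℓ + 1 - r := by
    intro vs hvs
    have hpart := Finset.card_filter_add_card_filter_not
      (s := vs) (p := fun v => A v < A u)
    have heq : vs.filter (fun v => ¬ A v < A u) = vs.filter (fun v => A u < A v) := by
      apply Finset.filter_congr
      intro v hv
      have := hneq vs hvs v hv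
      constructor
      · intro h
        exact lt_of_le_of_ne (not_lt.mp h) (Ne.symm this)
      · intro h; exact not_lt.mpr (le_of_lt h)
    rw [heq] at hpart
    have h1 := hvs.2.1
    have h2 := hvs.2.2
    omega
  obtain ⟨vs₁, hs₁, hinf⟩ := hα1
  obtain ⟨vs₂, hs₂, hsup⟩ := hβ1
  set Nlo := (G.neighborFinset u).filter (fun v => A v < A u) with hNlo
  set Nhi := (G.neighborFinset u).filter (fun v => A u < A v) with hNhi
  have hlo_sub : vs₁.filter (fun v => A v < A u) ⊆ Nlo := by
    intro v hv
    rw [hNlo, Finset.mem_filter]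
    rw [Finset.mem_filter] at hv
    exact ⟨hs₁.1 hv.1, hv.2⟩
  have hhi_sub : vs₂.filter (fun v => A u < A v) ⊆ Nhi := by
    intro v hv
    rw [hNhi, Finset.mem_filter]
    rw [Finset.mem_filter] at hv
    exact ⟨hs₂.1 hv.1, hv.2⟩
  have hlo_card : r - 1 ≤ Nlo.card := by
    have := Finset.card_le_card hlo_sub
    rw [hs₁.2.2] at this; exact this
  have hhi_card : ℓ + 1 - r ≤ Nhi.card := by
    have := Finset.card_le_card hhi_sub
    rw [hgt vs₂ hs₂] at this; exact this
  obtain ⟨T, hTsub, hTcard, hTtop⟩ := exists_topk A (r - 1) Nlo hlo_card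
  obtain ⟨B, hBsub, hBcard, hBbot⟩ := exists_botk A (ℓ + 1 - r) Nhi hhi_card
  -- T ∪ B is the optimal star
  have hTlt : ∀ v ∈ T, A v < A u := fun v hv => (Finset.mem_filter.mp (hTsub hv)).2
  have hBgt : ∀ v ∈ B, A u < A v := fun v hv => (Finset.mem_filter.mp (hBsub hv)).2
  have hdisj : Disjoint T B := by
    rw [Finset.disjoint_left]
    intro v hvT hvB
    exact absurd (hBgt v hvB) (not_lt.mpr (le_of_lt (hTlt v hvT)))
  have hstar : IsRankStar G A r ℓ u (T ∪ B) := by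
    refine ⟨?_, ?_, ?_⟩
    · intro v hv
      rcases Finset.mem_union.mp hv with h | h
      · exact (Finset.mem_filter.mp (hTsub h)).1
      · exact (Finset.mem_filter.mp (hBsub h)).1
    · rw [Finset.card_union_of_disjoint hdisj, hTcard, hBcard]; omega
    · have : (T ∪ B).filter (fun v => A v < A u) = T := by
        ext v
        simp only [Finset.mem_filter, Finset.mem_union]
        constructor
        · rintro ⟨h | h, hlt⟩
          · exact h
          · exact absurd (hBgt v h) (not_lt.mpr (le_of_lt hlt))
        · intro h; exact ⟨Or.inl h, hTlt v h⟩
      rw [this, hTcard]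
  -- lower bound: α ≤ A v for v in the optimal star
  have hlb : ∀ v ∈ insert u (T ∪ B), α ≤ A v := by
    intro v hv
    have hmem : ∀ w ∈ insert u vs₁, α ≤ A w := by
      intro w hw
      rw [← hinf]
      exact Finset.inf'_le A hw
    have hαu : α ≤ A u := hmem u (Finset.mem_insert_self u vs₁)
    rcases Finset.mem_insert.mp hv with rfl | hv
    · exact hαu
    rcases Finset.mem_union.mp hv with hvT | hvB
    · by_cases hv1 : v ∈ vs₁.filter (fun w => A w < A u)
      · exact hmem v (Finset.mem_insert_of_mem (Finset.mem_filter.mp hv1).1)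
      · -- find y in vs₁'s low part outside T
        have hS1card : (vs₁.filter (fun w => A w < A u)).card = r - 1 := hs₁.2.2
        have : ¬ (vs₁.filter (fun w => A w < A u)) ⊆ T := by
          intro hsub
          have := Finset.eq_of_subset_of_card_le hsub (by omega)
          rw [← this] at hvT
          exact hv1 hvT
        obtain ⟨y, hy, hyT⟩ := Finset.not_subset.mp this
        have hyN : y ∈ Nlo := hlo_sub hy
        have h1 : A y ≤ A v := hTtop v hvT y hyN hyT
        have h2 : α ≤ A y := hmem y (Finset.mem_insert_of_mem (Finset.mem_filter.mp hy).1)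
        linarith
    · exact le_of_lt (lt_of_le_of_lt hαu (hBgt v hvB))
  -- upper bound: A v ≤ β for v in the optimal star
  have hub : ∀ v ∈ insert u (T ∪ B), A v ≤ β := by
    intro v hv
    have hmem : ∀ w ∈ insert u vs₂, A w ≤ β := by
      intro w hw
      rw [← hsup]
      exact Finset.le_sup' A hw
    have hβu : A u ≤ β := hmem u (Finset.mem_insert_self u vs₂)
    rcases Finset.mem_insert.mp hv with rfl | hv
    · exact hβu
    rcases Finset.mem_union.mp hv with hvT | hvB
    · exact le_of_lt (lt_of_lt_of_le (hTlt v hvT) hβu)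
    · by_cases hv2 : v ∈ vs₂.filter (fun w => A u < A w)
      · exact hmem v (Finset.mem_insert_of_mem (Finset.mem_filter.mp hv2).1)
      · have hS2card : (vs₂.filter (fun w => A u < A w)).card = ℓ + 1 - r := hgt vs₂ hs₂
        have : ¬ (vs₂.filter (fun w => A u < A w)) ⊆ B := by
          intro hsub
          have := Finset.eq_of_subset_of_card_le hsub (by omega)
          rw [← this] at hvB
          exact hv2 hvB
        obtain ⟨y, hy, hyB⟩ := Finset.not_subset.mp this
        have hyN : y ∈ Nhi := hhi_sub hy
        have h1 : A v ≤ A y := hBbot v hvB y hyN hyB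
        have h2 : A y ≤ β := hmem y (Finset.mem_insert_of_mem (Finset.mem_filter.mp hy).1)
        linarith
  intro x₁ x₂ _
  constructor
  · rintro ⟨vs, hvs, hb⟩
    constructor
    · have h1 : x₁ ≤ (insert u vs).inf' (Finset.insert_nonempty u vs) A :=
        Finset.le_inf' _ _ (fun v hv => (hb v hv).1)
      exact le_trans h1 (hα2 vs hvs)
    · have h1 : (insert u vs).sup' (Finset.insert_nonempty u vs) A ≤ x₂ :=
        Finset.sup'_le _ _ (fun v hv => (hb v hv).2)
      exact le_trans (hβ2 vs hvs) h1
  · rintro ⟨h1, h2⟩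
    exact ⟨T ∪ B, hstar, fun v hv =>
      ⟨le_trans h1 (hlb v hv), le_trans (hub v hv) h2⟩⟩
end

section
/- Let k₀ ≥ 1 and i ≥ 2 be integers. Let S⁰_no and S⁰_yes be finite sets with |S⁰_no| + |S⁰_yes| ≤ k₀, and for each j ≥ 1 let S^j_raw be a finite set with |S^j_raw| ≤ 3^j·k₀. Define inductively, for j ≥ 1: S^j_no = S^{j−1}_no ∪ S^{j−1}_yes and S^j_yes = S^j_raw \ S^j_no. If moreover |S^{i−1}_raw| ≥ 3^{i−1}·k₀, then |S^{i−1}_yes| > 3^{i−1}·k₀ / 2. -/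
theorem free_triangle_set_size_lower_bound
    {α : Type} [DecidableEq α]
    (k₀ : ℕ) (hk₀ : 1 ≤ k₀) (i : ℕ) (hi : 2 ≤ i)
    (Sno Syes Sraw : ℕ → Finset α)
    (h0 : (Sno 0).card + (Syes 0).card ≤ k₀)
    (hraw : ∀ j : ℕ, 1 ≤ j → (Sraw j).card ≤ 3 ^ j * k₀)
    (hno : ∀ j : ℕ, Sno (j + 1) = Sno j ∪ Syes j)
    (hyes : ∀ j : ℕ, Syes (j + 1) = Sraw (j + 1) \ Sno (j + 1))
    (hrawi : 3 ^ (i - 1) * k₀ ≤ (Sraw (i - 1)).card) :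
    ((3 ^ (i - 1) * k₀ : ℕ) : ℝ) / 2 < ((Syes (i - 1)).card : ℝ) := by
  -- key invariant: 2 * |Sno j| ≤ (3^j - 1) * k₀ for j ≥ 1
  have key : ∀ j : ℕ, 1 ≤ j → 2 * (Sno j).card + k₀ ≤ 3 ^ j * k₀ := by
    intro j hj
    induction j with
    | zero => omega
    | succ n ih =>
      rcases Nat.eq_or_lt_of_le hj with h1 | h1
      · -- n = 0
        have hn : n = 0 := by omega
        subst hn
        have h2 : (Sno 1).card ≤ (Sno 0).card + (Syes 0).card :=
          (hno 0) ▸ Finset.card_union_le _ _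
        have : (Sno 1).card ≤ k₀ := le_trans h2 h0
        simpa using by omega
      · have hn : 1 ≤ n := by omega
        have ihn := ih hn
        have h2 : (Sno (n + 1)).card ≤ (Sno n).card + (Syes n).card :=
          (hno n) ▸ Finset.card_union_le _ _
        have h3 : (Syes n).card ≤ 3 ^ n * k₀ := by
          obtain ⟨m, rfl⟩ := Nat.exists_eq_add_of_le hn
          have := hyes m
          have : (Syes (m + 1)).card ≤ (Sraw (m + 1)).card := by
            rw [hyes m]; exact Finset.card_le_card (Finset.sdiff_subset)
          calc (Syes (1 + m)).card = (Syes (m + 1)).card := by rw [Nat.add_comm]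
            _ ≤ (Sraw (m + 1)).card := this
            _ ≤ 3 ^ (m + 1) * k₀ := hraw (m + 1) (by omega)
            _ = 3 ^ (1 + m) * k₀ := by rw [Nat.add_comm]
        have hpow : 3 ^ (n + 1) = 3 * 3 ^ n := by ring
        have hp1 : 1 ≤ 3 ^ n := Nat.one_le_pow _ _ (by norm_num)
        nlinarith [Nat.one_le_pow n 3 (by norm_num)]
  set m := i - 1 with hm
  have hm1 : 1 ≤ m := by omega
  have hsno := key m hm1
  have hsyes : Syes m = Sraw m \ Sno m := by
    obtain ⟨l, hl⟩ : ∃ l, m = l + 1 := ⟨m - 1, by omega⟩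
    rw [hl]; exact hyes l
  have hcard : (Sraw m).card - (Sno m).card ≤ (Syes m).card := by
    rw [hsyes]; exact Finset.le_card_sdiff _ _
  have hgoal : 3 ^ m * k₀ < 2 * (Syes m).card := by omega
  have : ((3 ^ m * k₀ : ℕ) : ℝ) < 2 * ((Syes m).card : ℝ) := by
    exact_mod_cast hgoal
  linarith
end
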